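/- arXiv:2604.12623 — 3 statements merged into one kernel-verified Lean document; each statement's English description precedes it below -/
import Mathlib

section
/- For all integers d ≥ 1, k ≥ 2, h ≥ 2 and r ≥ kh, there exists N such that for all n ≥ N, every subset A ⊆ [n]^d with |A| ≥ n^d/log n, and every r-template P of A satisfying R(P) ≤ |A|^{k(h−1)+1}/(log n)^{5kh} and |{x ∈ A : |P(x)| ≤ kh−2}| ≤ |A|/(log n)^3, there exists a set C ⊆ {1,...,r} with |C| = kh−1 such that |{x ∈ A : P(x) = C}| ≥ |A| − |A|/(log n)^2. -/
open Finset

/-- The `d`-dimensional grid `[n]^d = {1,…,n}^d`, as a finset of functions `Fin d → ℕ`. -/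
def grid (n d : ℕ) : Finset (Fin d → ℕ) :=
  Fintype.piFinset fun _ => Finset.Icc 1 n

/-- `X` is a `B_{k,h}`-solution set: `X` consists of `k*h` (pairwise distinct) points that can
be partitioned into `k` groups of `h` points each, all groups having the same sum. -/
def IsBkhSol (d k h : ℕ) (X : Finset (Fin d → ℕ)) : Prop :=
  X.card = k * h ∧
  ∃ P : Fin k → Finset (Fin d → ℕ),
    (∀ ℓ, (P ℓ).card = h) ∧
    (∀ ℓ₁ ℓ₂, ℓ₁ ≠ ℓ₂ → Disjoint (P ℓ₁) (P ℓ₂)) ∧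
    Finset.univ.biUnion P = X ∧
    (∀ ℓ₁ ℓ₂ : Fin k, (P ℓ₁).sum id = (P ℓ₂).sum id)

/-- The coloring `c` of `A` has a rainbow solution to the `B_{k,h}`-equation. -/
def HasRainbow (d k h r : ℕ) (A : Finset (Fin d → ℕ)) (c : ↥A → Fin r) : Prop :=
  ∃ X : Finset ↥A, IsBkhSol d k h (X.image Subtype.val) ∧ Set.InjOn c ↑X

/-- `gr d k h r A` is the number of `r`-colorings of `A` without rainbow solutions to the
`B_{k,h}`-equation. -/
noncomputable def gr (d k h r : ℕ) (A : Finset (Fin d → ℕ)) : ℕ :=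
  Nat.card {c : ↥A → Fin r // ¬ HasRainbow d k h r A c}

/-- `fdkh d k h A` is the number of `B_{k,h}`-solution sets contained in `A`. -/
noncomputable def fdkh (d k h : ℕ) (A : Finset (Fin d → ℕ)) : ℕ :=
  Nat.card {X : Finset (Fin d → ℕ) // X ⊆ A ∧ IsBkhSol d k h X}

/-- `S` is a rainbow-solution subtemplate of the `r`-template `P` of `A`: a `B_{k,h}`-solution
set in `A` together with an injective assignment of colors from the palettes of `P`. -/
def IsRainbowSub (d k h r : ℕ) (A : Finset (Fin d → ℕ))
    (P : (Fin d → ℕ) → Finset (Fin r)) (S : Finset ((Fin d → ℕ) × Fin r)) : Prop :=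
  Set.InjOn Prod.fst (S : Set ((Fin d → ℕ) × Fin r)) ∧
  Set.InjOn Prod.snd (S : Set ((Fin d → ℕ) × Fin r)) ∧
  S.image Prod.fst ⊆ A ∧ IsBkhSol d k h (S.image Prod.fst) ∧
  ∀ p ∈ S, p.2 ∈ P p.1

/-- `rainbowCount d k h r A P` is the number `R(P)` of rainbow-solution subtemplates of `P`. -/
noncomputable def rainbowCount (d k h r : ℕ) (A : Finset (Fin d → ℕ))
    (P : (Fin d → ℕ) → Finset (Fin r)) : ℕ :=
  Nat.card {S : Finset ((Fin d → ℕ) × Fin r) // IsRainbowSub d k h r A P S}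

open Finset

section Tuples

variable {n d k h : ℕ}

/-- Group palette: position 0 from `D`, other positions from `E`. -/
def slot (d h : ℕ) (D E : Finset (Fin d → ℕ)) (j : Fin h) : Finset (Fin d → ℕ) :=
  if (j : ℕ) = 0 then D else E

/-- Tuples of `k` groups of `h` points, group 0-slots in `D`, others in `E`, all group
sums equal. -/
def tupQ (d k h : ℕ) (D E : Finset (Fin d → ℕ)) : Finset (Fin k → Fin h → (Fin d → ℕ)) :=
  (Fintype.piFinset fun _ : Fin k => Fintype.piFinset (slot d h D E)).filter
    fun t => ∀ i i' : Fin k, ∑ j, t i j = ∑ j, t i' j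

/-- Those tuples with pairwise distinct entries. -/
def tupN (d k h : ℕ) (D E : Finset (Fin d → ℕ)) : Finset (Fin k → Fin h → (Fin d → ℕ)) :=
  (tupQ d k h D E).filter
    fun t => Function.Injective fun pq : Fin k × Fin h => t pq.1 pq.2

lemma grid_card : (grid n d).card = n ^ d := by
  simp [grid]

lemma mem_tupQ_mem {D E : Finset (Fin d → ℕ)} {t : Fin k → Fin h → (Fin d → ℕ)}
    (ht : t ∈ tupQ d k h D E) (i : Fin k) (j : Fin h) : t i j ∈ slot d h D E j := by
  rw [tupQ, mem_filter, Fintype.mem_piFinset] at ht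
  have := ht.1 i
  rw [Fintype.mem_piFinset] at this
  exact this j

lemma mem_tupQ_sums {D E : Finset (Fin d → ℕ)} {t : Fin k → Fin h → (Fin d → ℕ)}
    (ht : t ∈ tupQ d k h D E) (i i' : Fin k) : ∑ j, t i j = ∑ j, t i' j := by
  rw [tupQ, mem_filter] at ht
  exact ht.2 i i'

lemma slot_subset_grid {D E : Finset (Fin d → ℕ)} (hD : D ⊆ grid n d) (hE : E ⊆ grid n d)
    (j : Fin h) : slot d h D E j ⊆ grid n d := by
  rw [slot]; split <;> assumption

lemma mem_tupQ_grid {D E : Finset (Fin d → ℕ)} (hD : D ⊆ grid n d) (hE : E ⊆ grid n d)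
    {t : Fin k → Fin h → (Fin d → ℕ)} (ht : t ∈ tupQ d k h D E) (i : Fin k) (j : Fin h) :
    t i j ∈ grid n d :=
  slot_subset_grid hD hE j (mem_tupQ_mem ht i j)

lemma sum_mem_box {D E : Finset (Fin d → ℕ)} (hD : D ⊆ grid n d) (hE : E ⊆ grid n d)
    {g : Fin h → (Fin d → ℕ)} (hg : g ∈ Fintype.piFinset (slot d h D E)) :
    (∑ j, g j) ∈ Fintype.piFinset fun _ : Fin d => Finset.Icc 0 (h * n) := by
  rw [Fintype.mem_piFinset] at hg ⊢
  intro i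
  rw [Finset.mem_Icc]
  refine ⟨Nat.zero_le _, ?_⟩
  have : (∑ j, g j) i = ∑ j, g j i := by
    simp [Finset.sum_apply]
  rw [this]
  calc ∑ j, g j i ≤ ∑ _j : Fin h, n := by
        refine Finset.sum_le_sum fun j _ => ?_
        have := slot_subset_grid (n := n) hD hE j (hg j)
        rw [grid, Fintype.mem_piFinset] at this
        exact (Finset.mem_Icc.mp (this i)).2
    _ = h * n := by simp [mul_comm]

/-- The basic supersaturation count. -/
lemma tupQ_card_lower (hk : 1 ≤ k) (hh : 1 ≤ h) {D E : Finset (Fin d → ℕ)}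
    (hD : D ⊆ grid n d) (hE : E ⊆ grid n d) :
    ((D.card : ℝ) * (E.card : ℝ) ^ (h - 1)) ^ k / ((h * n + 1 : ℝ) ^ d) ^ (k - 1)
      ≤ ((tupQ d k h D E).card : ℝ) := by
  classical
  set grp : Finset (Fin h → (Fin d → ℕ)) := Fintype.piFinset (slot d h D E) with hgrp
  set S : Finset (Fin d → ℕ) := Fintype.piFinset fun _ : Fin d => Finset.Icc 0 (h * n) with hS
  set F : (Fin d → ℕ) → Finset (Fin h → (Fin d → ℕ)) :=
    fun s => grp.filter fun g => ∑ j, g j = s with hF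
  have i0 : Fin k := ⟨0, by omega⟩
  -- card of grp
  have hgrpcard : grp.card = D.card * E.card ^ (h - 1) := by
    rw [hgrp, Fintype.card_piFinset]
    obtain ⟨h', rfl⟩ : ∃ h', h = h' + 1 := ⟨h - 1, by omega⟩
    rw [Fin.prod_univ_succ]
    have h0 : slot d (h' + 1) D E 0 = D := by simp [slot]
    have hsucc : ∀ j : Fin h', slot d (h' + 1) D E j.succ = E := by
      intro j; simp [slot, Fin.val_succ]
    rw [h0]
    simp only [hsucc]
    simp
  -- decomposition of tupQ
  have hdecomp : tupQ d k h D E = S.biUnion fun s => Fintype.piFinset fun _ : Fin k => F s := by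
    ext t
    constructor
    · intro ht
      rw [Finset.mem_biUnion]
      refine ⟨∑ j, t i0 j, ?_, ?_⟩
      · exact sum_mem_box hD hE (by rw [Fintype.mem_piFinset]; intro j; exact mem_tupQ_mem ht i0 j)
      · rw [Fintype.mem_piFinset]
        intro i
        rw [hF, Finset.mem_filter]
        constructor
        · rw [hgrp, Fintype.mem_piFinset]; intro j; exact mem_tupQ_mem ht i j
        · exact mem_tupQ_sums ht i i0
    · intro ht
      rw [Finset.mem_biUnion] at ht
      obtain ⟨s, _, hts⟩ := ht
      rw [Fintype.mem_piFinset] at hts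
      rw [tupQ, Finset.mem_filter]
      constructor
      · rw [Fintype.mem_piFinset]
        intro i
        exact (Finset.mem_filter.mp (hts i)).1
      · intro i i'
        have h1 := (Finset.mem_filter.mp (hts i)).2
        have h2 := (Finset.mem_filter.mp (hts i')).2
        rw [h1, h2]
  have hdisj : ∀ s ∈ S, ∀ s' ∈ S, s ≠ s' →
      Disjoint (Fintype.piFinset fun _ : Fin k => F s)
        (Fintype.piFinset fun _ : Fin k => F s') := by
    intro s _ s' _ hss
    rw [Finset.disjoint_left]
    intro t ht ht'
    rw [Fintype.mem_piFinset] at ht ht'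
    have h1 := (Finset.mem_filter.mp (ht i0)).2
    have h2 := (Finset.mem_filter.mp (ht' i0)).2
    exact hss (h1 ▸ h2 ▸ rfl)
  have hcard : (tupQ d k h D E).card = ∑ s ∈ S, (F s).card ^ k := by
    rw [hdecomp, Finset.card_biUnion hdisj]
    refine Finset.sum_congr rfl fun s _ => ?_
    rw [Fintype.card_piFinset]
    simp
  -- fiber sum
  have hfibsum : ∑ s ∈ S, (F s).card = grp.card := by
    rw [hF]
    exact (Finset.card_eq_sum_card_fiberwise fun g hg => sum_mem_box hD hE hg).symm
  -- power mean
  have hpm := pow_sum_div_card_le_sum_pow (s := S) (f := fun s => ((F s).card : ℝ))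
    (fun i _ => by positivity) (k - 1)
  have hk1 : k - 1 + 1 = k := by omega
  rw [hk1] at hpm
  have hScard : (S.card : ℝ) = (h * n + 1 : ℝ) ^ d := by
    rw [hS, Fintype.card_piFinset]
    push_cast
    simp
  have hsum1 : ∑ s ∈ S, ((F s).card : ℝ) = ((D.card : ℝ) * (E.card : ℝ) ^ (h - 1)) := by
    rw [← Nat.cast_sum, hfibsum, hgrpcard]
    push_cast
    ring
  have hsum2 : ∑ s ∈ S, ((F s).card : ℝ) ^ k = ((tupQ d k h D E).card : ℝ) := by
    rw [hcard]
    push_cast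
    rfl
  rw [hsum1, hsum2, hScard] at hpm
  exact hpm

end Tuples

section P2
variable {n d k h : ℕ}

lemma sum_cancel_aux {d h : ℕ} (f g : Fin h → (Fin d → ℕ)) (j₀ : Fin h)
    (hs : ∑ j, f j = ∑ j, g j) (hoff : ∀ j, j ≠ j₀ → f j = g j) : f j₀ = g j₀ := by
  have h1 : f j₀ + ∑ j ∈ Finset.univ.erase j₀, f j = ∑ j, f j :=
    Finset.add_sum_erase _ f (Finset.mem_univ j₀)
  have h2 : g j₀ + ∑ j ∈ Finset.univ.erase j₀, g j = ∑ j, g j :=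
    Finset.add_sum_erase _ g (Finset.mem_univ j₀)
  have h3 : ∑ j ∈ Finset.univ.erase j₀, f j = ∑ j ∈ Finset.univ.erase j₀, g j :=
    Finset.sum_congr rfl fun j hj => hoff j (Finset.mem_erase.mp hj).1
  have key : f j₀ + ∑ j ∈ Finset.univ.erase j₀, g j
      = g j₀ + ∑ j ∈ Finset.univ.erase j₀, g j := by
    calc f j₀ + ∑ j ∈ Finset.univ.erase j₀, g j
        = f j₀ + ∑ j ∈ Finset.univ.erase j₀, f j := by rw [h3]
      _ = ∑ j, f j := h1
      _ = ∑ j, g j := hs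
      _ = g j₀ + ∑ j ∈ Finset.univ.erase j₀, g j := h2.symm
  exact add_right_cancel key

/-- Tuples in `tupQ` with a coincidence at two fixed distinct positions are scarce. -/
lemma tupQ_pair_card (hk : 1 ≤ k) (hh : 2 ≤ h) {D E : Finset (Fin d → ℕ)}
    (hD : D ⊆ grid n d) (hE : E ⊆ grid n d) (p q : Fin k × Fin h) (hpq : p ≠ q) :
    ((tupQ d k h D E).filter fun t => t p.1 p.2 = t q.1 q.2).card
      ≤ (n ^ d) ^ (k * h - k) := by
  classical
  have hh0 : 0 < h := by omega
  set j0 : Fin h := ⟨0, by omega⟩ with hj0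
  set j1 : Fin h := ⟨1, by omega⟩ with hj1
  set c : Fin k → Fin k × Fin h := fun i => (i, if q = (i, j0) then j1 else j0) with hc
  set C : Finset (Fin k × Fin h) := insert q ((Finset.univ.erase p.1).image c) with hC
  set Fr : Finset (Fin k × Fin h) := Finset.univ \ C with hFr
  -- q not in image
  have hqni : q ∉ (Finset.univ.erase p.1).image c := by
    intro hmem
    obtain ⟨i, _, hci⟩ := Finset.mem_image.mp hmem
    by_cases hqi : q = (i, j0)
    · rw [hc] at hci; simp only [if_pos hqi] at hci
      rw [hqi] at hci
      have : j1 = j0 := congrArg Prod.snd hci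
      simp [hj0, hj1, Fin.ext_iff] at this
    · rw [hc] at hci; simp only [if_neg hqi] at hci
      exact hqi hci.symm
  have hcinj : Function.Injective c := by
    intro a b hab
    exact congrArg Prod.fst hab
  have hCcard : C.card = k := by
    rw [hC, Finset.card_insert_of_notMem hqni, Finset.card_image_of_injective _ hcinj,
      Finset.card_erase_of_mem (Finset.mem_univ _), Finset.card_univ, Fintype.card_fin]
    omega
  have hFrcard : Fr.card = k * h - k := by
    rw [hFr, Finset.card_sdiff_of_subset (Finset.subset_univ _), Finset.card_univ, hCcard]
    simp
  -- p not in C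
  have hpC : p ∉ C := by
    intro hmem
    rcases Finset.mem_insert.mp hmem with h1 | h2
    · exact hpq h1
    · obtain ⟨i, hi, hci⟩ := Finset.mem_image.mp h2
      have hine : i ≠ p.1 := (Finset.mem_erase.mp hi).1
      exact hine (congrArg Prod.fst hci)
  refine le_trans (Finset.card_le_card_of_injOn
    (t := Fintype.piFinset fun _ : ↥Fr => grid n d)
    (fun t => fun x : ↥Fr => t x.1.1 x.1.2)
    (fun t ht => ?memgoal) ?injgoal) ?cardgoal
  case memgoal =>
    rw [Finset.mem_coe, Fintype.mem_piFinset]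
    rintro ⟨x, hx⟩
    exact mem_tupQ_grid hD hE (Finset.mem_filter.mp ht).1 x.1 x.2
  case injgoal =>
    intro t ht t' ht' hres
    simp only [Finset.coe_filter, Set.mem_setOf_eq] at ht ht'
    obtain ⟨htQ, htbad⟩ := ht
    obtain ⟨ht'Q, ht'bad⟩ := ht'
    have hout : ∀ a : Fin k × Fin h, a ∉ C → t a.1 a.2 = t' a.1 a.2 := by
      intro a ha
      have hmemFr : a ∈ Fr := by rw [hFr, Finset.mem_sdiff]; exact ⟨Finset.mem_univ _, ha⟩
      exact congrFun hres ⟨a, hmemFr⟩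
    have hEp : t p.1 p.2 = t' p.1 p.2 := hout p hpC
    have hq : t q.1 q.2 = t' q.1 q.2 := by rw [← htbad, ← ht'bad]; exact hEp
    have hviaq : ∀ a : Fin k × Fin h, a = q → t a.1 a.2 = t' a.1 a.2 := by
      intro a ha; rw [ha]; exact hq
    have hgp : ∀ j, t p.1 j = t' p.1 j := by
      intro j
      by_cases hj : ((p.1, j) : Fin k × Fin h) = q
      · exact hviaq (p.1, j) hj
      · refine hout (p.1, j) ?_
        intro hmem
        rcases Finset.mem_insert.mp hmem with h1 | h2
        · exact hj h1
        · obtain ⟨i, hi, hci⟩ := Finset.mem_image.mp h2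
          exact (Finset.mem_erase.mp hi).1 (congrArg Prod.fst hci)
    have hsum_p : ∑ j, t p.1 j = ∑ j, t' p.1 j :=
      Finset.sum_congr rfl fun j _ => hgp j
    have hgrp : ∀ i, i ≠ p.1 → ∀ j, t i j = t' i j := by
      intro i hi
      set jc : Fin h := if q = (i, j0) then j1 else j0 with hjc
      have hoffc : ∀ j, j ≠ jc → t i j = t' i j := by
        intro j hj
        by_cases hq' : ((i, j) : Fin k × Fin h) = q
        · exact hviaq (i, j) hq'
        · refine hout (i, j) ?_
          intro hmem
          rcases Finset.mem_insert.mp hmem with h1 | h2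
          · exact hq' h1
          · obtain ⟨i', _, hci⟩ := Finset.mem_image.mp h2
            have : i' = i := congrArg Prod.fst hci
            rw [this] at hci
            have : j = jc := (congrArg Prod.snd hci).symm
            exact hj this
      have hsums : ∑ j, t i j = ∑ j, t' i j := by
        calc ∑ j, t i j = ∑ j, t p.1 j := mem_tupQ_sums htQ i p.1
          _ = ∑ j, t' p.1 j := hsum_p
          _ = ∑ j, t' i j := (mem_tupQ_sums ht'Q i p.1).symm
      intro j
      by_cases hj : j = jc
      · rw [hj]; exact sum_cancel_aux (t i) (t' i) jc hsums hoffc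
      · exact hoffc j hj
    funext i j
    by_cases hi : i = p.1
    · rw [hi]; exact hgp j
    · exact hgrp i hi j
  case cardgoal =>
    rw [Fintype.card_piFinset]
    rw [Finset.prod_const, grid_card, Finset.card_univ, Fintype.card_coe, hFrcard]

/-- Degenerate tuples are scarce. -/
lemma tupQ_deg_card (hk : 1 ≤ k) (hh : 2 ≤ h) {D E : Finset (Fin d → ℕ)}
    (hD : D ⊆ grid n d) (hE : E ⊆ grid n d) :
    ((tupQ d k h D E).filter
        fun t => ¬ Function.Injective fun pq : Fin k × Fin h => t pq.1 pq.2).card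
      ≤ (k * h) ^ 2 * (n ^ d) ^ (k * h - k) := by
  classical
  set Pr : Finset ((Fin k × Fin h) × (Fin k × Fin h)) :=
    Finset.univ.filter fun z => z.1 ≠ z.2 with hPr
  have hsub : (tupQ d k h D E).filter
      (fun t => ¬ Function.Injective fun pq : Fin k × Fin h => t pq.1 pq.2)
      ⊆ Pr.biUnion fun z => (tupQ d k h D E).filter fun t => t z.1.1 z.1.2 = t z.2.1 z.2.2 := by
    intro t ht
    rw [Finset.mem_filter] at ht
    obtain ⟨a, b, hfab, hab⟩ := Function.not_injective_iff.mp ht.2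
    rw [Finset.mem_biUnion]
    exact ⟨(a, b), by rw [hPr]; simp [hab], by rw [Finset.mem_filter]; exact ⟨ht.1, hfab⟩⟩
  calc ((tupQ d k h D E).filter
        fun t => ¬ Function.Injective fun pq : Fin k × Fin h => t pq.1 pq.2).card
      ≤ (Pr.biUnion fun z =>
          (tupQ d k h D E).filter fun t => t z.1.1 z.1.2 = t z.2.1 z.2.2).card :=
        Finset.card_le_card hsub
    _ ≤ ∑ z ∈ Pr, ((tupQ d k h D E).filter fun t => t z.1.1 z.1.2 = t z.2.1 z.2.2).card :=
        Finset.card_biUnion_le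
    _ ≤ Pr.card * (n ^ d) ^ (k * h - k) := by
        rw [← smul_eq_mul]
        refine Finset.sum_le_card_nsmul _ _ _ fun z hz => ?_
        have hne : z.1 ≠ z.2 := by
          rw [hPr, Finset.mem_filter] at hz; exact hz.2
        exact tupQ_pair_card hk hh hD hE z.1 z.2 hne
    _ ≤ (k * h) ^ 2 * (n ^ d) ^ (k * h - k) := by
        have : Pr.card ≤ (k * h) ^ 2 := by
          calc Pr.card ≤ (Finset.univ : Finset ((Fin k × Fin h) × (Fin k × Fin h))).card :=
                Finset.card_le_card (Finset.filter_subset _ _)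
            _ = (k * h) ^ 2 := by
                simp [Finset.card_univ]
                ring
        exact Nat.mul_le_mul_right _ this
end P2

section P3
variable {n d k h r : ℕ}

lemma isRainbow_finite (d k h r : ℕ) (A : Finset (Fin d → ℕ))
    (P : (Fin d → ℕ) → Finset (Fin r)) :
    Finite {S : Finset ((Fin d → ℕ) × Fin r) // IsRainbowSub d k h r A P S} := by
  refine Finite.of_injective
    (fun S => (⟨S.1, ?_⟩ : ↥((A ×ˢ (Finset.univ : Finset (Fin r))).powerset))) ?_
  · rw [Finset.mem_powerset]
    intro p hp
    rw [Finset.mem_product]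
    exact ⟨S.2.2.2.1 (Finset.mem_image_of_mem Prod.fst hp), Finset.mem_univ _⟩
  · intro S S' hSS
    apply Subtype.ext
    have h2 := congrArg
      (fun z : ↥((A ×ˢ (Finset.univ : Finset (Fin r))).powerset) => z.1) hSS
    exact h2

lemma tupN_le_rainbow (hk : 2 ≤ k) (hh : 2 ≤ h)
    {A D E : Finset (Fin d → ℕ)} (hDA : D ⊆ A) (hEA : E ⊆ A)
    (P : (Fin d → ℕ) → Finset (Fin r))
    (hSDR : ∀ X : Finset (Fin d → ℕ), X.card = k * h → X ⊆ D ∪ E → (∃ x ∈ X, x ∈ D) →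
      (∃ x ∈ X, x ∈ E) →
      ∃ φ : (Fin d → ℕ) → Fin r, Set.InjOn φ ↑X ∧ ∀ x ∈ X, φ x ∈ P x) :
    (tupN d k h D E).card ≤ (k * h).factorial * rainbowCount d k h r A P := by
  classical
  set tN := tupN d k h D E with htN
  set Φ : (Fin k → Fin h → (Fin d → ℕ)) → Finset (Fin d → ℕ) :=
    fun t => Finset.image (fun pq : Fin k × Fin h => t pq.1 pq.2) Finset.univ with hΦdef
  have hmemN : ∀ t ∈ tN, t ∈ tupQ d k h D E ∧
      Function.Injective fun pq : Fin k × Fin h => t pq.1 pq.2 := by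
    intro t ht
    rw [htN, tupN, Finset.mem_filter] at ht
    exact ht
  -- basic facts about Φ t
  have hfacts : ∀ t ∈ tN, (Φ t).card = k * h ∧ Φ t ⊆ D ∪ E ∧ (∃ x ∈ Φ t, x ∈ D) ∧
      (∃ x ∈ Φ t, x ∈ E) ∧ IsBkhSol d k h (Φ t) := by
    intro t ht
    obtain ⟨htQ, htinj⟩ := hmemN t ht
    have hcard : (Φ t).card = k * h := by
      rw [hΦdef]
      simp only
      rw [Finset.card_image_of_injective _ htinj, Finset.card_univ]
      simp
    have hsub : Φ t ⊆ D ∪ E := by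
      intro x hx
      obtain ⟨pq, _, rfl⟩ := Finset.mem_image.mp hx
      have := mem_tupQ_mem htQ pq.1 pq.2
      rw [slot] at this
      split at this
      · exact Finset.mem_union_left _ this
      · exact Finset.mem_union_right _ this
    have hD' : ∃ x ∈ Φ t, x ∈ D := by
      refine ⟨t (⟨0, by omega⟩ : Fin k) (⟨0, by omega⟩ : Fin h), ?_, ?_⟩
      · exact Finset.mem_image_of_mem _
          (Finset.mem_univ ((⟨0, by omega⟩ : Fin k), (⟨0, by omega⟩ : Fin h)))
      · have := mem_tupQ_mem htQ (⟨0, by omega⟩ : Fin k) (⟨0, by omega⟩ : Fin h)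
        simpa [slot] using this
    have hE' : ∃ x ∈ Φ t, x ∈ E := by
      refine ⟨t (⟨0, by omega⟩ : Fin k) (⟨1, by omega⟩ : Fin h), ?_, ?_⟩
      · exact Finset.mem_image_of_mem _
          (Finset.mem_univ ((⟨0, by omega⟩ : Fin k), (⟨1, by omega⟩ : Fin h)))
      · have := mem_tupQ_mem htQ (⟨0, by omega⟩ : Fin k) (⟨1, by omega⟩ : Fin h)
        simpa [slot] using this
    have hrowinj : ∀ ℓ : Fin k, Function.Injective (t ℓ) := by
      intro ℓ j j' hjj
      have := htinj (a₁ := (ℓ, j)) (a₂ := (ℓ, j')) hjj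
      exact congrArg Prod.snd this
    have hsol : IsBkhSol d k h (Φ t) := by
      refine ⟨hcard, fun ℓ => Finset.image (t ℓ) Finset.univ, ?_, ?_, ?_, ?_⟩
      · intro ℓ
        rw [Finset.card_image_of_injective _ (hrowinj ℓ), Finset.card_univ]
        simp
      · intro ℓ₁ ℓ₂ hne
        rw [Finset.disjoint_left]
        intro x hx1 hx2
        obtain ⟨j, _, rfl⟩ := Finset.mem_image.mp hx1
        obtain ⟨j', _, heq⟩ := Finset.mem_image.mp hx2
        have := htinj (a₁ := (ℓ₂, j')) (a₂ := (ℓ₁, j)) heq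
        exact hne (congrArg Prod.fst this).symm
      · ext x
        constructor
        · intro hx
          obtain ⟨ℓ, _, hxℓ⟩ := Finset.mem_biUnion.mp hx
          obtain ⟨j, _, rfl⟩ := Finset.mem_image.mp hxℓ
          exact Finset.mem_image_of_mem _ (Finset.mem_univ (ℓ, j))
        · intro hx
          obtain ⟨pq, _, rfl⟩ := Finset.mem_image.mp hx
          exact Finset.mem_biUnion.mpr ⟨pq.1, Finset.mem_univ _,
            Finset.mem_image_of_mem _ (Finset.mem_univ pq.2)⟩
      · intro ℓ₁ ℓ₂
        have e1 : (Finset.image (t ℓ₁) Finset.univ).sum id = ∑ j, t ℓ₁ j :=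
          Finset.sum_image fun x _ y _ hxy => hrowinj ℓ₁ hxy
        have e2 : (Finset.image (t ℓ₂) Finset.univ).sum id = ∑ j, t ℓ₂ j :=
          Finset.sum_image fun x _ y _ hxy => hrowinj ℓ₂ hxy
        rw [e1, e2]
        exact mem_tupQ_sums htQ ℓ₁ ℓ₂
    exact ⟨hcard, hsub, hD', hE', hsol⟩
  -- fiber bound
  have hfiber : ∀ X ∈ tN.image Φ, (tN.filter fun t' => Φ t' = X).card ≤ (k * h).factorial := by
    intro X hX
    obtain ⟨t₀, ht₀, rfl⟩ := Finset.mem_image.mp hX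
    have hXcard : Fintype.card ↥(Φ t₀) = k * h := by
      rw [Fintype.card_coe]; exact (hfacts t₀ ht₀).1
    have hmk : ∀ t' ∈ tN.filter (fun t'' => Φ t'' = Φ t₀),
        ∀ pq : Fin k × Fin h, t' pq.1 pq.2 ∈ Φ t₀ := by
      intro t' ht' pq
      rw [Finset.mem_filter] at ht'
      rw [← ht'.2]
      exact Finset.mem_image_of_mem _ (Finset.mem_univ pq)
    have ht₀self : t₀ ∈ tN.filter (fun t'' => Φ t'' = Φ t₀) := by
      rw [Finset.mem_filter]; exact ⟨ht₀, rfl⟩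
    set mkE : ∀ t' ∈ tN.filter (fun t'' => Φ t'' = Φ t₀), (Fin k × Fin h) ↪ ↥(Φ t₀) :=
      fun t' ht' => ⟨fun pq => ⟨t' pq.1 pq.2, hmk t' ht' pq⟩, by
        intro a b hab
        have := (hmemN t' (Finset.mem_filter.mp ht').1).2
        exact this (congrArg Subtype.val hab)⟩ with hmkE
    calc (tN.filter fun t' => Φ t' = Φ t₀).card
        ≤ (Finset.univ : Finset ((Fin k × Fin h) ↪ ↥(Φ t₀))).card := by
          refine Finset.card_le_card_of_injOn
            (fun t' => if ht' : t' ∈ tN.filter (fun t'' => Φ t'' = Φ t₀) then mkE t' ht'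
              else mkE t₀ ht₀self)
            (fun _ _ => Finset.mem_univ _) ?_
          intro t₁ h₁ t₂ h₂ h12
          rw [Finset.mem_coe] at h₁ h₂
          simp only [dif_pos h₁, dif_pos h₂] at h12
          funext i j
          have h3 : mkE t₁ h₁ (i, j) = mkE t₂ h₂ (i, j) := by rw [h12]
          exact congrArg Subtype.val h3
      _ = (k * h).factorial := by
          rw [Finset.card_univ, Fintype.card_embedding_eq, hXcard]
          simp [Nat.descFactorial_self]
  have hstep1 : tN.card ≤ (k * h).factorial * (tN.image Φ).card :=
    Finset.card_le_mul_card_image tN _ hfiber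
  -- from image to rainbowCount
  have hmkS : ∀ X ∈ tN.image Φ, ∃ S : Finset ((Fin d → ℕ) × Fin r),
      IsRainbowSub d k h r A P S ∧ S.image Prod.fst = X := by
    intro X hX
    obtain ⟨t, ht, rfl⟩ := Finset.mem_image.mp hX
    obtain ⟨hcard, hsub, hD', hE', hsol⟩ := hfacts t ht
    obtain ⟨φ, hφinj, hφmem⟩ := hSDR (Φ t) hcard hsub hD' hE'
    have himg : ((Φ t).image fun x => (x, φ x)).image Prod.fst = Φ t := by
      ext y
      simp
    refine ⟨(Φ t).image fun x => (x, φ x), ⟨?_, ?_, ?_, ?_, ?_⟩, himg⟩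
    · intro a ha b hb hab
      rw [Finset.mem_coe] at ha hb
      obtain ⟨x, _, rfl⟩ := Finset.mem_image.mp ha
      obtain ⟨y, _, rfl⟩ := Finset.mem_image.mp hb
      simp only at hab
      rw [hab]
    · intro a ha b hb hab
      rw [Finset.mem_coe] at ha hb
      obtain ⟨x, hx, rfl⟩ := Finset.mem_image.mp ha
      obtain ⟨y, hy, rfl⟩ := Finset.mem_image.mp hb
      simp only at hab
      have := hφinj (Finset.mem_coe.mpr hx) (Finset.mem_coe.mpr hy) hab
      rw [this]
    · rw [himg]
      exact fun x hx => Finset.union_subset hDA hEA (hsub hx)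
    · rw [himg]; exact hsol
    · intro p hp
      obtain ⟨x, hx, rfl⟩ := Finset.mem_image.mp hp
      exact hφmem x hx
  choose SX hSX1 hSX2 using hmkS
  have hstep2 : (tN.image Φ).card ≤ rainbowCount d k h r A P := by
    haveI := isRainbow_finite d k h r A P
    show (tN.image Φ).card ≤ Nat.card {S : Finset ((Fin d → ℕ) × Fin r) //
      IsRainbowSub d k h r A P S}
    rw [← Nat.card_eq_finsetCard (tN.image Φ)]
    refine Nat.card_le_card_of_injective
      (fun X => ⟨SX X.1 X.2, hSX1 X.1 X.2⟩) ?_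
    intro X Y hXY
    have : SX X.1 X.2 = SX Y.1 Y.2 := congrArg Subtype.val hXY
    have hXY2 : X.1 = Y.1 := by
      rw [← hSX2 X.1 X.2, ← hSX2 Y.1 Y.2, this]
    exact Subtype.ext hXY2
  calc tN.card ≤ (k * h).factorial * (tN.image Φ).card := hstep1
    _ ≤ (k * h).factorial * rainbowCount d k h r A P := Nat.mul_le_mul_left _ hstep2
end P3

section P4

lemma sdr_exists {d r k h : ℕ} (hr1 : 1 ≤ r) (hkh : 1 ≤ k * h)
    (X : Finset (Fin d → ℕ)) (P : (Fin d → ℕ) → Finset (Fin r)) (hX : X.card = k * h)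
    (hbig : ∀ x ∈ X, k * h - 1 ≤ (P x).card)
    (hcase : (∀ x ∈ X, k * h ≤ (P x).card) ∨
      ∃ x ∈ X, ∃ y ∈ X, P x ≠ P y ∧ (P y).card = k * h - 1) :
    ∃ φ : (Fin d → ℕ) → Fin r, Set.InjOn φ ↑X ∧ ∀ x ∈ X, φ x ∈ P x := by
  classical
  have hhall : ∀ s : Finset ↥X, s.card ≤ (s.biUnion fun x => P ↑x).card := by
    intro s
    rcases s.eq_empty_or_nonempty with rfl | ⟨x, hx⟩
    · simp
    have hsX : s.card ≤ k * h := by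
      calc s.card ≤ (Finset.univ : Finset ↥X).card := Finset.card_le_univ s
        _ = k * h := by rw [Finset.card_univ, Fintype.card_coe, hX]
    have hxsub : P ↑x ⊆ s.biUnion fun y => P ↑y :=
      Finset.subset_biUnion_of_mem (fun y : ↥X => P ↑y) hx
    rcases hcase with hcase | ⟨a, ha, b, hb, hne, hcb⟩
    · exact le_trans hsX (le_trans (hcase ↑x x.2) (Finset.card_le_card hxsub))
    by_cases hs : s.card ≤ k * h - 1
    · exact le_trans hs (le_trans (hbig ↑x x.2) (Finset.card_le_card hxsub))
    have hcard : s.card = k * h := by omega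
    have hsu : s = Finset.univ :=
      Finset.eq_univ_of_card s (by rw [hcard, Fintype.card_coe, hX])
    have hain : (⟨a, ha⟩ : ↥X) ∈ s := by rw [hsu]; exact Finset.mem_univ _
    have hbin : (⟨b, hb⟩ : ↥X) ∈ s := by rw [hsu]; exact Finset.mem_univ _
    by_cases hPa : k * h ≤ (P a).card
    · exact le_trans hsX (le_trans hPa (Finset.card_le_card
        (Finset.subset_biUnion_of_mem (fun y : ↥X => P ↑y) hain)))
    have hca : (P a).card = k * h - 1 := le_antisymm (by omega) (hbig a ha)
    have hPab : ¬ P b ⊆ P a := by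
      intro hsub'
      exact hne (Finset.eq_of_subset_of_card_le hsub' (by omega)).symm
    obtain ⟨cc, hccb, hcca⟩ := Finset.not_subset.mp hPab
    have hins : insert cc (P a) ⊆ s.biUnion fun y => P ↑y := by
      refine Finset.insert_subset ?_ ?_
      · exact Finset.subset_biUnion_of_mem (fun y : ↥X => P ↑y) hbin hccb
      · exact Finset.subset_biUnion_of_mem (fun y : ↥X => P ↑y) hain
    calc s.card = k * h := hcard
      _ = (insert cc (P a)).card := by
          rw [Finset.card_insert_of_notMem hcca, hca]; omega
      _ ≤ _ := Finset.card_le_card hins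
  obtain ⟨f, hfinj, hfmem⟩ :=
    (Finset.all_card_le_biUnion_card_iff_exists_injective fun x : ↥X => P ↑x).mp hhall
  refine ⟨fun v => if hv : v ∈ X then f ⟨v, hv⟩ else (⟨0, by omega⟩ : Fin r), ?_, ?_⟩
  · intro x hx y hy hxy
    rw [Finset.mem_coe] at hx hy
    simp only [dif_pos hx, dif_pos hy] at hxy
    exact congrArg Subtype.val (hfinj hxy)
  · intro x hx
    simp only [dif_pos hx]
    exact hfmem ⟨x, hx⟩
end P4

section P5

set_option maxHeartbeats 1000000 in
lemma contra_engine {n d k h r : ℕ} (hd : 1 ≤ d) (hk : 2 ≤ k) (hh : 2 ≤ h) (hn : 2 ≤ n)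
    {A D E : Finset (Fin d → ℕ)} (hA : A ⊆ grid n d) (hDA : D ⊆ A) (hEA : E ⊆ A)
    (P : (Fin d → ℕ) → Finset (Fin r))
    (hSDR : ∀ X : Finset (Fin d → ℕ), X.card = k * h → X ⊆ D ∪ E → (∃ x ∈ X, x ∈ D) →
      (∃ x ∈ X, x ∈ E) →
      ∃ φ : (Fin d → ℕ) → Fin r, Set.InjOn φ ↑X ∧ ∀ x ∈ X, φ x ∈ P x)
    (hK0 : 2 * ((k * h).factorial : ℝ) * 4 ^ (h * k) * (2 * (h : ℝ)) ^ (d * (k - 1)) + 2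
        ≤ Real.logb 2 n)
    (hK1 : 2 * ((k : ℝ) * h) ^ 2 * 4 ^ (h * k) * (2 * (h : ℝ)) ^ (d * (k - 1))
        * Real.logb 2 n ^ (3 * h * k) ≤ (n : ℝ))
    (hL4 : (4 : ℝ) ≤ Real.logb 2 n)
    (hAlb : ((n : ℝ)) ^ d / Real.logb 2 n ≤ (A.card : ℝ))
    (hDc : (A.card : ℝ) / (4 * Real.logb 2 n ^ 2) ≤ (D.card : ℝ))
    (hEc : (A.card : ℝ) / (4 * Real.logb 2 n ^ 2) ≤ (E.card : ℝ)) :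
    (A.card : ℝ) ^ (k * (h - 1) + 1) / Real.logb 2 n ^ (5 * k * h)
      < (rainbowCount d k h r A P : ℝ) := by
  have hDg : D ⊆ grid n d := hDA.trans hA
  have hEg : E ⊆ grid n d := hEA.trans hA
  -- ℕ exponent facts
  have hnat1 : h * k = k * h := Nat.mul_comm h k
  have hnat2 : k * h = k * (h - 1) + k := by
    conv_lhs => rw [show h = h - 1 + 1 from by omega]
    ring
  have hnat3 : 4 ≤ k * h := Nat.mul_le_mul hk hh
  have hnat4 : 5 * k * h = 5 * (k * h) := by ring
  have hnat5 : 3 * h * k = 3 * (k * h) := by ring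
  have hnat6 : 2 * (h * k) = 2 * (k * h) := by ring
  have hk1 : 1 ≤ k := by omega
  have hh1n : 1 ≤ h := by omega
  have hd0 : d ≠ 0 := by omega
  have hhm : h = h - 1 + 1 := by omega
  have hE2 : k * h - k + (k - 1) = k * h - 1 := by omega
  have hE3 : k * h - 1 + 1 = h * k := by omega
  have hEa : (k * (h - 1) + 1) + (k - 1) = h * k := by omega
  have he1 : 1 ≤ 5 * k * h - 2 * (h * k) - (k - 1) := by omega
  have heLexp : 5 * k * h = 2 * (h * k) + (k - 1) + (5 * k * h - 2 * (h * k) - (k - 1)) := by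
    omega
  set L : ℝ := Real.logb 2 n with hLdef
  clear_value L
  set a : ℝ := (A.card : ℝ) with hadef
  clear_value a
  set nd : ℝ := (n : ℝ) ^ d with hnddef
  clear_value nd
  have hL1 : (1 : ℝ) ≤ L := by linarith only [hL4]
  have hLpos : (0 : ℝ) < L := by linarith only [hL4]
  have hL0 : (0 : ℝ) ≤ L := hLpos.le
  have hn1 : (1 : ℝ) ≤ (n : ℝ) := by exact_mod_cast Nat.one_le_of_lt hn
  have hnd1 : (1 : ℝ) ≤ nd := by rw [hnddef]; exact one_le_pow₀ hn1
  have hndpos : (0 : ℝ) < nd := by linarith only [hnd1]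
  have hnd0 : (0 : ℝ) ≤ nd := hndpos.le
  have hapos : (0 : ℝ) < a := lt_of_lt_of_le (div_pos hndpos hLpos) hAlb
  have ha0 : (0 : ℝ) ≤ a := hapos.le
  have hD0 : (0 : ℝ) ≤ (D.card : ℝ) := Nat.cast_nonneg _
  have hE0 : (0 : ℝ) ≤ (E.card : ℝ) := Nat.cast_nonneg _
  have h2h : (0 : ℝ) < 2 * (h : ℝ) := by
    have h2' : (2 : ℝ) ≤ (h : ℝ) := by exact_mod_cast hh
    linarith only [h2']
  have hFpos : (0 : ℝ) < ((k * h).factorial : ℝ) := by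
    exact_mod_cast Nat.factorial_pos (k * h)
  set F : ℝ := ((k * h).factorial : ℝ) with hFdef
  clear_value F
  set Kp : ℝ := (4 : ℝ) ^ (h * k) with hKpdef
  clear_value Kp
  set C2 : ℝ := (2 * (h : ℝ)) ^ (d * (k - 1)) with hC2def
  clear_value C2
  have hKppos : (0 : ℝ) < Kp := by rw [hKpdef]; positivity
  have hC2pos : (0 : ℝ) < C2 := by rw [hC2def]; exact pow_pos h2h _
  set m : ℕ := k * (h - 1) + 1 with hmdef
  clear_value m
  have hLsq : (0 : ℝ) < 4 * L ^ 2 := by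
    have hp2 := pow_pos hLpos 2
    linarith only [hp2]
  have hbeta0 : (0 : ℝ) ≤ a / (4 * L ^ 2) := (div_pos hapos hLsq).le
  -- ℕ counting chain
  have hsplitN : (tupN d k h D E).card +
      ((tupQ d k h D E).filter
        (fun t => ¬ Function.Injective fun pq : Fin k × Fin h => t pq.1 pq.2)).card
      = (tupQ d k h D E).card := by
    rw [tupN]
    exact Finset.card_filter_add_card_filter_not _
  have hdegN := tupQ_deg_card (n := n) hk1 hh hDg hEg
  have hrainN := tupN_le_rainbow hk hh hDA hEA P hSDR
  have hlowQ := tupQ_card_lower (n := n) hk1 hh1n hDg hEg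
  set W : ℝ := ((D.card : ℝ) * (E.card : ℝ) ^ (h - 1)) ^ k
      / ((h * n + 1 : ℝ) ^ d) ^ (k - 1) with hWdef
  clear_value W
  set B : ℝ := ((k : ℝ) * h) ^ 2 * nd ^ (k * h - k) with hBdef
  clear_value B
  have hW_le : W ≤ ((tupQ d k h D E).card : ℝ) := hlowQ
  have hdegR : (((tupQ d k h D E).filter
      (fun t => ¬ Function.Injective fun pq : Fin k × Fin h => t pq.1 pq.2)).card : ℝ)
      ≤ B := by
    rw [hBdef, hnddef]
    calc (((tupQ d k h D E).filter
        (fun t => ¬ Function.Injective fun pq : Fin k × Fin h => t pq.1 pq.2)).card : ℝ)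
        ≤ (((k * h) ^ 2 * (n ^ d) ^ (k * h - k) : ℕ) : ℝ) := by exact_mod_cast hdegN
      _ = ((k : ℝ) * h) ^ 2 * ((n : ℝ) ^ d) ^ (k * h - k) := by push_cast; ring
  have htupN_R : W - B ≤ ((tupN d k h D E).card : ℝ) := by
    have h1 : ((tupN d k h D E).card : ℝ) +
        (((tupQ d k h D E).filter
          (fun t => ¬ Function.Injective fun pq : Fin k × Fin h => t pq.1 pq.2)).card : ℝ)
        = ((tupQ d k h D E).card : ℝ) := by exact_mod_cast hsplitN
    linarith only [h1, hdegR, hW_le]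
  have hrainR : ((tupN d k h D E).card : ℝ) ≤ F * (rainbowCount d k h r A P : ℝ) := by
    rw [hFdef]
    exact_mod_cast hrainN
  -- W1 : closed-form lower bound for W
  set DD : ℝ := Kp * L ^ (2 * (h * k)) * C2 * nd ^ (k - 1) with hDDdef
  clear_value DD
  have hDDpos : (0 : ℝ) < DD := by
    rw [hDDdef]
    exact mul_pos (mul_pos (mul_pos hKppos (pow_pos hLpos _)) hC2pos) (pow_pos hndpos _)
  set W1 : ℝ := a ^ (h * k) / DD with hW1def
  clear_value W1
  have hW1pos : 0 < W1 := by rw [hW1def]; exact div_pos (pow_pos hapos _) hDDpos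
  have hW1_le_W : W1 ≤ W := by
    have hprod : (a / (4 * L ^ 2)) ^ h ≤ (D.card : ℝ) * (E.card : ℝ) ^ (h - 1) := by
      have h1 : (a / (4 * L ^ 2)) ^ h
          = (a / (4 * L ^ 2)) * (a / (4 * L ^ 2)) ^ (h - 1) := by
        conv_lhs => rw [hhm]
        rw [pow_succ']
      rw [h1]
      have h2 : (a / (4 * L ^ 2)) ^ (h - 1) ≤ (E.card : ℝ) ^ (h - 1) :=
        pow_le_pow_left₀ hbeta0 hEc _
      have h3 : (0 : ℝ) ≤ (a / (4 * L ^ 2)) ^ (h - 1) := pow_nonneg hbeta0 _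
      calc (a / (4 * L ^ 2)) * (a / (4 * L ^ 2)) ^ (h - 1)
          ≤ (D.card : ℝ) * (a / (4 * L ^ 2)) ^ (h - 1) :=
            mul_le_mul_of_nonneg_right hDc h3
        _ ≤ (D.card : ℝ) * (E.card : ℝ) ^ (h - 1) :=
            mul_le_mul_of_nonneg_left h2 (le_trans hbeta0 hDc)
    have hnum : a ^ (h * k) / (Kp * L ^ (2 * (h * k)))
        ≤ ((D.card : ℝ) * (E.card : ℝ) ^ (h - 1)) ^ k := by
      have heq : a ^ (h * k) / (Kp * L ^ (2 * (h * k))) = ((a / (4 * L ^ 2)) ^ h) ^ k := by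
        rw [← pow_mul, div_pow, mul_pow, ← pow_mul, hKpdef]
      rw [heq]
      exact pow_le_pow_left₀ (pow_nonneg hbeta0 h) hprod k
    have hden : ((h * n + 1 : ℝ) ^ d) ^ (k - 1) ≤ C2 * nd ^ (k - 1) := by
      have hh1 : (1 : ℝ) ≤ (h : ℝ) := by exact_mod_cast hh1n
      have h1 : (1 : ℝ) ≤ (h : ℝ) * n := by
        calc (1 : ℝ) = 1 * 1 := (one_mul 1).symm
          _ ≤ (h : ℝ) * n := mul_le_mul hh1 hn1 zero_le_one (le_trans zero_le_one hh1)
      have h2 : ((h * n + 1 : ℝ) ^ d) ≤ (2 * (h : ℝ)) ^ d * nd := by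
        rw [hnddef, ← mul_pow]
        apply pow_le_pow_left₀ (by positivity)
        push_cast
        linarith only [h1]
      calc ((h * n + 1 : ℝ) ^ d) ^ (k - 1) ≤ ((2 * (h : ℝ)) ^ d * nd) ^ (k - 1) :=
            pow_le_pow_left₀ (by positivity) h2 _
        _ = C2 * nd ^ (k - 1) := by rw [mul_pow, hC2def, ← pow_mul]
    have hdpos : (0 : ℝ) < ((h * n + 1 : ℝ) ^ d) ^ (k - 1) := by positivity
    calc W1 = (a ^ (h * k) / (Kp * L ^ (2 * (h * k)))) / (C2 * nd ^ (k - 1)) := by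
          rw [hW1def, hDDdef]
          ring
      _ ≤ ((D.card : ℝ) * (E.card : ℝ) ^ (h - 1)) ^ k / ((h * n + 1 : ℝ) ^ d) ^ (k - 1) :=
          div_le_div₀ (pow_nonneg (mul_nonneg hD0 (pow_nonneg hE0 _)) _) hnum hdpos hden
      _ = W := by rw [hWdef]
  have hnd_n : (n : ℝ) ≤ nd := by
    rw [hnddef]
    exact le_self_pow₀ hn1 hd0
  -- G2 : B ≤ W1 / 2
  have hG2 : B ≤ W1 / 2 := by
    have halow : nd ^ (h * k) / L ^ (h * k) ≤ a ^ (h * k) := by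
      have h1 : (nd / L) ^ (h * k) ≤ a ^ (h * k) :=
        pow_le_pow_left₀ (div_nonneg hnd0 hL0) hAlb _
      rwa [div_pow] at h1
    have e1 : L ^ (h * k) * L ^ (2 * (h * k)) = L ^ (3 * h * k) := by
      rw [show 3 * h * k = h * k + 2 * (h * k) from by ring, pow_add]
    have e2 : nd ^ (k * h - k) * nd ^ (k - 1) = nd ^ (k * h - 1) := by
      rw [← hE2, pow_add]
    have e3 : nd * nd ^ (k * h - 1) = nd ^ (h * k) := by
      rw [← hE3, pow_succ]
      exact mul_comm _ _
    have hprod : B * (L ^ (h * k) * DD * 2) ≤ nd ^ (h * k) := by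
      calc B * (L ^ (h * k) * DD * 2)
          = (2 * ((k : ℝ) * h) ^ 2 * Kp * C2) * (L ^ (h * k) * L ^ (2 * (h * k)))
            * (nd ^ (k * h - k) * nd ^ (k - 1)) := by
            rw [hBdef, hDDdef]; ring
        _ = (2 * ((k : ℝ) * h) ^ 2 * Kp * C2 * L ^ (3 * h * k)) * nd ^ (k * h - 1) := by
            rw [e1, e2]
        _ ≤ nd * nd ^ (k * h - 1) := by
            refine mul_le_mul_of_nonneg_right ?_ (pow_nonneg hnd0 _)
            calc 2 * ((k : ℝ) * h) ^ 2 * Kp * C2 * L ^ (3 * h * k) ≤ (n : ℝ) := hK1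
              _ ≤ nd := hnd_n
        _ = nd ^ (h * k) := e3
    have hc1 : (0 : ℝ) < L ^ (h * k) * (DD * 2) :=
      mul_pos (pow_pos hLpos _) (mul_pos hDDpos two_pos)
    calc B ≤ (nd ^ (h * k) / L ^ (h * k)) / (DD * 2) := by
          rw [div_div, le_div_iff₀ hc1]
          calc B * (L ^ (h * k) * (DD * 2)) = B * (L ^ (h * k) * DD * 2) := by ring
            _ ≤ nd ^ (h * k) := hprod
      _ ≤ a ^ (h * k) / (DD * 2) := by
          rw [div_le_div_iff_of_pos_right (mul_pos hDDpos two_pos)]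
          exact halow
      _ = W1 / 2 := by rw [hW1def, div_div]
  -- G1 : a^m / L^(5kh) < W1 / (2F)
  have hG1 : a ^ m / L ^ (5 * k * h) < W1 / (2 * F) := by
    have ea : a ^ (h * k) = a ^ m * a ^ (k - 1) := by
      rw [← hEa, pow_add]
    have hndL : nd ≤ a * L := (div_le_iff₀ hLpos).mp hAlb
    have hnda : nd ^ (k - 1) ≤ a ^ (k - 1) * L ^ (k - 1) := by
      calc nd ^ (k - 1) ≤ (a * L) ^ (k - 1) := pow_le_pow_left₀ hnd0 hndL _
        _ = a ^ (k - 1) * L ^ (k - 1) := mul_pow _ _ _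
    have heL : L ^ (5 * k * h)
        = L ^ (2 * (h * k)) * L ^ (k - 1) * L ^ (5 * k * h - 2 * (h * k) - (k - 1)) := by
      conv_lhs => rw [heLexp]
      rw [pow_add, pow_add]
    have hLe : 2 * F * Kp * C2 + 2 ≤ L ^ (5 * k * h - 2 * (h * k) - (k - 1)) := by
      calc 2 * F * Kp * C2 + 2 ≤ L := hK0
        _ ≤ L ^ (5 * k * h - 2 * (h * k) - (k - 1)) :=
            le_self_pow₀ hL1 (Nat.one_le_iff_ne_zero.mp he1)
    have hcFK : (0 : ℝ) < 2 * F * Kp * C2 :=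
      mul_pos (mul_pos (mul_pos two_pos hFpos) hKppos) hC2pos
    have hWform : W1 / (2 * F) = a ^ (h * k) / (DD * (2 * F)) := by
      rw [hW1def, div_div]
    rw [hWform, div_lt_div_iff₀ (pow_pos hLpos _) (mul_pos hDDpos (mul_pos two_pos hFpos))]
    calc a ^ m * (DD * (2 * F))
        = (2 * F * Kp * C2) * (a ^ m * L ^ (2 * (h * k)) * nd ^ (k - 1)) := by
          rw [hDDdef]; ring
      _ ≤ (2 * F * Kp * C2) * (a ^ m * L ^ (2 * (h * k)) * (a ^ (k - 1) * L ^ (k - 1))) := by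
          refine mul_le_mul_of_nonneg_left ?_ hcFK.le
          exact mul_le_mul_of_nonneg_left hnda
            (mul_nonneg (pow_nonneg ha0 m) (pow_nonneg hL0 _))
      _ < L ^ (5 * k * h - 2 * (h * k) - (k - 1))
            * (a ^ m * L ^ (2 * (h * k)) * (a ^ (k - 1) * L ^ (k - 1))) := by
          refine mul_lt_mul_of_pos_right ?_ ?_
          · linarith only [hLe]
          · exact mul_pos (mul_pos (pow_pos hapos m) (pow_pos hLpos _))
              (mul_pos (pow_pos hapos _) (pow_pos hLpos _))
      _ = a ^ (h * k) * L ^ (5 * k * h) := by rw [ea, heL]; ring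
  -- final assembly
  have hchain : W1 / (2 * F) ≤ (W - B) / F := by
    have h1 : W1 - W1 / 2 ≤ W - B := by linarith only [hW1_le_W, hG2]
    have h2 : W1 / (2 * F) = (W1 - W1 / 2) / F := by
      field_simp
      ring
    rw [h2]
    exact (div_le_div_iff_of_pos_right hFpos).mpr h1
  have hRfinal : (W - B) / F ≤ (rainbowCount d k h r A P : ℝ) := by
    rw [div_le_iff₀ hFpos]
    have h1 : F * (rainbowCount d k h r A P : ℝ)
        = (rainbowCount d k h r A P : ℝ) * F := mul_comm _ _
    linarith only [h1, htupN_R, hrainR]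
  calc a ^ m / L ^ (5 * k * h) < W1 / (2 * F) := hG1
    _ ≤ (W - B) / F := hchain
    _ ≤ (rainbowCount d k h r A P : ℝ) := hRfinal
end P5


lemma eventually_log_pow (c : ℕ) (K : ℝ) :
    ∀ᶠ x : ℝ in Filter.atTop, K * Real.logb 2 x ^ c ≤ x := by
  rcases Nat.eq_zero_or_pos c with rfl | hc
  · filter_upwards [Filter.eventually_ge_atTop (K * 1)] with x hx
    simpa using hx
  have hcR : ((c : ℕ) : ℝ) ≠ 0 := by
    have : c ≠ 0 := by omega
    exact_mod_cast this
  -- (log x)^c = o(x)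
  have h1 : (fun x : ℝ => Real.log x ^ c) =o[Filter.atTop] (fun x : ℝ => x) := by
    have h2 := (isLittleO_log_rpow_atTop (show (0 : ℝ) < 1 / (c : ℝ) by positivity)).pow hc
    refine h2.congr' (Filter.EventuallyEq.refl _ _) ?_
    filter_upwards [Filter.eventually_gt_atTop (0 : ℝ)] with x hx
    rw [← Real.rpow_natCast (x ^ (1 / (c : ℝ))) c, ← Real.rpow_mul hx.le, one_div,
      inv_mul_cancel₀ hcR, Real.rpow_one]
  set M : ℝ := |K| / (Real.log 2) ^ c with hMdef
  have hM0 : 0 ≤ M := by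
    rw [hMdef]
    have := Real.log_pos (by norm_num : (1 : ℝ) < 2)
    positivity
  have h3 := h1.def (show (0 : ℝ) < 1 / (M + 1) by positivity)
  filter_upwards [h3, Filter.eventually_ge_atTop (1 : ℝ)] with x hx hx1
  have hlx : 0 ≤ Real.log x := Real.log_nonneg hx1
  have hx0 : 0 ≤ x := le_trans zero_le_one hx1
  have hnorm : Real.log x ^ c ≤ 1 / (M + 1) * x := by
    have h4 := hx
    rwa [Real.norm_eq_abs, Real.norm_eq_abs, abs_of_nonneg (pow_nonneg hlx c),
      abs_of_nonneg hx0] at h4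
  have hlogb0 : 0 ≤ Real.logb 2 x := Real.logb_nonneg (by norm_num) hx1
  calc K * Real.logb 2 x ^ c ≤ |K| * Real.logb 2 x ^ c :=
        mul_le_mul_of_nonneg_right (le_abs_self K) (pow_nonneg hlogb0 c)
    _ = M * Real.log x ^ c := by
        rw [hMdef, Real.logb, div_pow]
        ring
    _ ≤ M * (1 / (M + 1) * x) := mul_le_mul_of_nonneg_left hnorm hM0
    _ ≤ x := by
        have h5 : M * (1 / (M + 1)) ≤ 1 := by
          rw [mul_one_div, div_le_one (by positivity)]
          linarith only []
        calc M * (1 / (M + 1) * x) = M * (1 / (M + 1)) * x := by ring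
          _ ≤ 1 * x := mul_le_mul_of_nonneg_right h5 hx0
          _ = x := one_mul x

set_option maxHeartbeats 1000000 in
/-- stability — good templates have a dominant palette of size kh-1. -/
theorem stmt15 (d k h r : ℕ) (hd : 1 ≤ d) (hk : 2 ≤ k) (hh : 2 ≤ h) (hr : k * h ≤ r) :
    ∃ N : ℕ, ∀ n : ℕ, N ≤ n → ∀ A : Finset (Fin d → ℕ), A ⊆ grid n d →
      (n : ℝ) ^ d / Real.logb 2 n ≤ (A.card : ℝ) →
      ∀ P : (Fin d → ℕ) → Finset (Fin r),
        (rainbowCount d k h r A P : ℝ) ≤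
          (A.card : ℝ) ^ (k * (h - 1) + 1) / (Real.logb 2 n) ^ (5 * k * h) →
        ((A.filter fun x => (P x).card ≤ k * h - 2).card : ℝ) ≤
          (A.card : ℝ) / (Real.logb 2 n) ^ 3 →
        ∃ C : Finset (Fin r), C.card = k * h - 1 ∧
          (A.card : ℝ) - (A.card : ℝ) / (Real.logb 2 n) ^ 2 ≤
            ((A.filter fun x => P x = C).card : ℝ) := by
  classical
  have hkh4 : 4 ≤ k * h := Nat.mul_le_mul hk hh
  have hr1 : 1 ≤ r := by omega
  have hkh1 : 1 ≤ k * h := by omega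
  have harith : ∀ c : ℕ, c ≤ k * h - 2 ∨ c = k * h - 1 ∨ k * h ≤ c := fun c => by omega
  -- eventual largeness conditions
  have ev1 : ∀ᶠ n : ℕ in Filter.atTop, 2 ≤ n := Filter.eventually_ge_atTop 2
  have ev2 : ∀ᶠ n : ℕ in Filter.atTop,
      2 * ((k * h).factorial : ℝ) * 4 ^ (h * k) * (2 * (h : ℝ)) ^ (d * (k - 1)) + 2
        + 4 + 2 ^ r ≤ Real.logb 2 (n : ℝ) := by
    have h1 : Filter.Tendsto (fun n : ℕ => Real.logb 2 (n : ℝ)) Filter.atTop Filter.atTop :=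
      (Real.tendsto_logb_atTop (by norm_num)).comp tendsto_natCast_atTop_atTop
    exact h1.eventually_ge_atTop _
  have ev3 : ∀ᶠ n : ℕ in Filter.atTop,
      2 * ((k : ℝ) * h) ^ 2 * 4 ^ (h * k) * (2 * (h : ℝ)) ^ (d * (k - 1))
        * Real.logb 2 (n : ℝ) ^ (3 * h * k) ≤ (n : ℝ) :=
    tendsto_natCast_atTop_atTop.eventually (eventually_log_pow (3 * h * k) _)
  obtain ⟨N, hN⟩ := Filter.eventually_atTop.mp (ev1.and (ev2.and ev3))
  refine ⟨N, ?_⟩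
  intro n hn A hA hAcard P hR hbad
  obtain ⟨hn2, hK0L, hK1L⟩ := hN n hn
  set L : ℝ := Real.logb 2 (n : ℝ) with hLdef
  have hpos1 : (0 : ℝ) ≤ 2 * ((k * h).factorial : ℝ) * 4 ^ (h * k)
      * (2 * (h : ℝ)) ^ (d * (k - 1)) := by positivity
  have hpos2 : (0 : ℝ) ≤ (2 : ℝ) ^ r := by positivity
  have hL4 : (4 : ℝ) ≤ L := by linarith only [hK0L, hpos1, hpos2]
  have h2r : (2 : ℝ) ^ r ≤ L := by linarith only [hK0L, hpos1]
  have hK0main : 2 * ((k * h).factorial : ℝ) * 4 ^ (h * k)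
      * (2 * (h : ℝ)) ^ (d * (k - 1)) + 2 ≤ L := by linarith only [hK0L, hpos2]
  have hL0 : (0 : ℝ) ≤ L := by linarith only [hL4]
  have hL1 : (1 : ℝ) ≤ L := by linarith only [hL4]
  have hLpos : (0 : ℝ) < L := by linarith only [hL4]
  have hn0 : (0 : ℝ) < (n : ℝ) := by
    have : (0 : ℕ) < n := by omega
    exact_mod_cast this
  have hApos : (0 : ℝ) < (A.card : ℝ) :=
    lt_of_lt_of_le (div_pos (pow_pos hn0 d) hLpos) hAcard
  have hL2_16 : (16 : ℝ) ≤ L ^ 2 := by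
    calc (16 : ℝ) = 4 * 4 := by norm_num
      _ ≤ L * L := mul_le_mul hL4 hL4 (by norm_num) hL0
      _ = L ^ 2 := (pow_two L).symm
  have hL3_64 : (64 : ℝ) ≤ L ^ 3 := by
    calc (64 : ℝ) = 16 * 4 := by norm_num
      _ ≤ L ^ 2 * L := mul_le_mul hL2_16 hL4 (by norm_num) (pow_nonneg hL0 2)
      _ = L ^ 3 := by ring
  have hLL : L ≤ L ^ 2 := by
    calc L = L * 1 := (mul_one L).symm
      _ ≤ L * L := mul_le_mul_of_nonneg_left hL1 hL0
      _ = L ^ 2 := (pow_two L).symm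
  have h4L2_64 : (64 : ℝ) ≤ 4 * L ^ 2 := by linarith only [hL2_16]
  have h4L2_L3 : 4 * L ^ 2 ≤ L ^ 3 := by
    calc 4 * L ^ 2 ≤ L * L ^ 2 := mul_le_mul_of_nonneg_right hL4 (pow_nonneg hL0 2)
      _ = L ^ 3 := by ring
  -- the three palette classes
  set Bad := A.filter (fun x => (P x).card ≤ k * h - 2) with hBaddef
  set A2 := A.filter (fun x => k * h ≤ (P x).card) with hA2def
  set A3 := A.filter (fun x => (P x).card = k * h - 1) with hA3def
  have hcover : A.card ≤ Bad.card + A2.card + A3.card := by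
    have hsub : A ⊆ (Bad ∪ A2) ∪ A3 := by
      intro x hx
      rcases harith (P x).card with h1 | h1 | h1
      · exact Finset.mem_union_left _
          (Finset.mem_union_left _ (Finset.mem_filter.mpr ⟨hx, h1⟩))
      · exact Finset.mem_union_right _ (Finset.mem_filter.mpr ⟨hx, h1⟩)
      · exact Finset.mem_union_left _
          (Finset.mem_union_right _ (Finset.mem_filter.mpr ⟨hx, h1⟩))
    calc A.card ≤ ((Bad ∪ A2) ∪ A3).card := Finset.card_le_card hsub
      _ ≤ (Bad ∪ A2).card + A3.card := Finset.card_union_le _ _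
      _ ≤ Bad.card + A2.card + A3.card :=
          Nat.add_le_add_right (Finset.card_union_le _ _) _
  -- rule out Case 1 : many points with ≥ kh colors
  have hA2small : (A2.card : ℝ) < (A.card : ℝ) / (4 * Real.logb 2 (n : ℝ) ^ 2) := by
    by_contra hcon
    push_neg at hcon
    have hsdr1 : ∀ X : Finset (Fin d → ℕ), X.card = k * h → X ⊆ A2 ∪ A2 →
        (∃ x ∈ X, x ∈ A2) → (∃ x ∈ X, x ∈ A2) →
        ∃ φ : (Fin d → ℕ) → Fin r, Set.InjOn φ ↑X ∧ ∀ x ∈ X, φ x ∈ P x := by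
      intro X hXcard hXsub _ _
      refine sdr_exists hr1 hkh1 X P hXcard ?_ (Or.inl ?_)
      · intro x hx
        have h1 : x ∈ A2 := by
          have := hXsub hx
          rwa [Finset.union_self] at this
        exact le_trans (Nat.sub_le _ _) (Finset.mem_filter.mp h1).2
      · intro x hx
        have h1 : x ∈ A2 := by
          have := hXsub hx
          rwa [Finset.union_self] at this
        exact (Finset.mem_filter.mp h1).2
    have hlt := contra_engine hd hk hh hn2 hA (Finset.filter_subset _ _)
      (Finset.filter_subset _ _) P hsdr1 hK0main hK1L hL4 hAcard hcon hcon
    linarith only [hlt, hR]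
  -- hence A3 is almost everything
  have hcovR : (A.card : ℝ) ≤ (Bad.card : ℝ) + (A2.card : ℝ) + (A3.card : ℝ) := by
    exact_mod_cast hcover
  have hq1 : (A.card : ℝ) / (4 * L ^ 2) = ((A.card : ℝ) / L ^ 2) / 4 := by ring
  have hq2 : (A.card : ℝ) / (2 * L ^ 2) = ((A.card : ℝ) / L ^ 2) / 2 := by ring
  have hdd : (A.card : ℝ) / L ^ 3 ≤ (A.card : ℝ) / (4 * L ^ 2) :=
    div_le_div_of_nonneg_left hApos.le (by linarith only [h4L2_64]) h4L2_L3
  have hA3R : (A.card : ℝ) - (A.card : ℝ) / L ^ 3 - (A.card : ℝ) / (4 * L ^ 2)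
      ≤ (A3.card : ℝ) := by
    linarith only [hcovR, hbad, hA2small]
  have hdiv3 : (A.card : ℝ) / L ^ 3 ≤ (A.card : ℝ) / 64 :=
    div_le_div_of_nonneg_left hApos.le (by norm_num) hL3_64
  have hdiv2 : (A.card : ℝ) / (4 * L ^ 2) ≤ (A.card : ℝ) / 64 :=
    div_le_div_of_nonneg_left hApos.le (by norm_num) h4L2_64
  have hA3half : (A.card : ℝ) / 2 ≤ (A3.card : ℝ) := by
    linarith only [hA3R, hdiv3, hdiv2, hApos]
  have hA3pos : (0 : ℕ) < A3.card := by
    have h1 : (0 : ℝ) < (A3.card : ℝ) := lt_of_lt_of_le (by linarith only [hApos]) hA3half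
    exact_mod_cast h1
  have hA3ne : A3.Nonempty := Finset.card_pos.mp hA3pos
  -- most popular palette C
  obtain ⟨C, hCmem, hCmax⟩ := Finset.exists_max_image (A3.image P)
    (fun c => (A3.filter fun x => P x = c).card) (hA3ne.image P)
  obtain ⟨x₀, hx₀, hPx₀⟩ := Finset.mem_image.mp hCmem
  have hCcard : C.card = k * h - 1 := by
    rw [← hPx₀]
    exact (Finset.mem_filter.mp hx₀).2
  set Ee := A3.filter (fun x => P x = C) with hEedef
  set Dd := A3.filter (fun x => ¬ P x = C) with hDddef
  have hDEsum : Ee.card + Dd.card = A3.card :=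
    Finset.card_filter_add_card_filter_not _
  have himgcard : (A3.image P).card ≤ 2 ^ r := by
    calc (A3.image P).card ≤ ((Finset.univ : Finset (Fin r)).powerset).card :=
          Finset.card_le_card
            (fun c _ => Finset.mem_powerset.mpr (Finset.subset_univ c))
      _ = 2 ^ r := by rw [Finset.card_powerset, Finset.card_univ, Fintype.card_fin]
  have hA3count : A3.card ≤ 2 ^ r * Ee.card := by
    have h1 : A3.card = ∑ c ∈ A3.image P, (A3.filter fun x => P x = c).card :=
      Finset.card_eq_sum_card_fiberwise (fun x hx => Finset.mem_image_of_mem P hx)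
    calc A3.card = ∑ c ∈ A3.image P, (A3.filter fun x => P x = c).card := h1
      _ ≤ (A3.image P).card • Ee.card :=
          Finset.sum_le_card_nsmul _ _ _ (fun c hc => hCmax c hc)
      _ = (A3.image P).card * Ee.card := by rw [smul_eq_mul]
      _ ≤ 2 ^ r * Ee.card := Nat.mul_le_mul_right _ himgcard
  have h2r0 : (0 : ℝ) < (2 : ℝ) ^ r := by positivity
  have hEeR : (A.card : ℝ) / (2 * 2 ^ r) ≤ (Ee.card : ℝ) := by
    have h1 : (A3.card : ℝ) ≤ (2 : ℝ) ^ r * (Ee.card : ℝ) := by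
      have := hA3count
      push_cast at this ⊢
      exact_mod_cast this
    rw [div_le_iff₀ (by positivity)]
    nlinarith only [hA3half, h1]
  have hEeMain : (A.card : ℝ) / (4 * Real.logb 2 (n : ℝ) ^ 2) ≤ (Ee.card : ℝ) := by
    have h1 : 2 * (2 : ℝ) ^ r ≤ 4 * L ^ 2 := by
      linarith only [h2r, hLL, pow_nonneg hL0 2]
    have h2 : (A.card : ℝ) / (4 * L ^ 2) ≤ (A.card : ℝ) / (2 * 2 ^ r) :=
      div_le_div_of_nonneg_left hApos.le (by linarith only [h2r0]) h1
    linarith only [h2, hEeR]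
  by_cases hDsmall : (Dd.card : ℝ) < (A.card : ℝ) / (2 * L ^ 2)
  · -- conclusion with palette C
    refine ⟨C, hCcard, ?_⟩
    have hsub : Ee ⊆ A.filter fun x => P x = C := by
      intro x hx
      have h1 := Finset.mem_filter.mp hx
      exact Finset.mem_filter.mpr ⟨(Finset.mem_filter.mp h1.1).1, h1.2⟩
    have h1 : (Ee.card : ℝ) ≤ ((A.filter fun x => P x = C).card : ℝ) := by
      exact_mod_cast Finset.card_le_card hsub
    have h3 : (Ee.card : ℝ) + (Dd.card : ℝ) = (A3.card : ℝ) := by exact_mod_cast hDEsum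
    linarith only [hA3R, h1, h3, hDsmall, hdd, hq1, hq2]
  · push_neg at hDsmall
    exfalso
    have ha2 : (0 : ℝ) ≤ (A.card : ℝ) / L ^ 2 :=
      div_nonneg (Nat.cast_nonneg _) (pow_nonneg hL0 2)
    have hDdMain : (A.card : ℝ) / (4 * Real.logb 2 (n : ℝ) ^ 2) ≤ (Dd.card : ℝ) := by
      linarith only [hDsmall, hq1, hq2, ha2]
    have hDsub : Dd ⊆ A := subset_trans (Finset.filter_subset _ _) (Finset.filter_subset _ _)
    have hEsub : Ee ⊆ A := subset_trans (Finset.filter_subset _ _) (Finset.filter_subset _ _)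
    have hsdr2 : ∀ X : Finset (Fin d → ℕ), X.card = k * h → X ⊆ Dd ∪ Ee →
        (∃ x ∈ X, x ∈ Dd) → (∃ x ∈ X, x ∈ Ee) →
        ∃ φ : (Fin d → ℕ) → Fin r, Set.InjOn φ ↑X ∧ ∀ x ∈ X, φ x ∈ P x := by
      intro X hXcard hXsub hXD hXE
      obtain ⟨xD, hxDX, hxDD⟩ := hXD
      obtain ⟨xE, hxEX, hxEE⟩ := hXE
      refine sdr_exists hr1 hkh1 X P hXcard ?_ (Or.inr ⟨xD, hxDX, xE, hxEX, ?_, ?_⟩)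
      · intro x hx
        have h1 : x ∈ A3 := by
          rcases Finset.mem_union.mp (hXsub hx) with h2 | h2
          · exact (Finset.mem_filter.mp h2).1
          · exact (Finset.mem_filter.mp h2).1
        exact le_of_eq ((Finset.mem_filter.mp h1).2).symm
      · intro heq
        exact (Finset.mem_filter.mp hxDD).2 (heq.trans (Finset.mem_filter.mp hxEE).2)
      · have h1 : xE ∈ A3 := (Finset.mem_filter.mp hxEE).1
        exact (Finset.mem_filter.mp h1).2
    have hlt := contra_engine hd hk hh hn2 hA hDsub hEsub P hsdr2 hK0main hK1L hL4 hAcard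
      hDdMain hEeMain
    linarith only [hlt, hR]
end

section
/- For all integers d ≥ 1, k ≥ 2, h ≥ 2 and r ≥ kh, there exist a constant c > 0 and an integer N such that for all n ≥ N, every subset A ⊆ [n]^d with |A| ≥ n^d/log n, and every finite collection 𝒟 of r-templates of A satisfying (a) every P ∈ 𝒟 has R(P) ≤ |A|^{k(h−1)+1}/(log n)^{5kh}, (b) every P ∈ 𝒟 has |{x ∈ A : |P(x)| ≤ kh−2}| > |A|/(log n)^3, and (c) |𝒟| ≤ 2^{|A|·n^{−k(h−1)d/(kh−1)}·(log n)^{10}}, the number of r-colorings of A without rainbow solutions to the B_{k,h}-equation that are subtemplates of at least one P ∈ 𝒟 is at most 2^{−c·|A|/(log n)^3}·(kh−1)^{|A|}. -/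
open Finset

/-!
A colouring below a template `P` is one of the `∏ₓ |P(x)|` choices from its palettes. Against
`(kh - 1)^|A|`, each point whose palette has at most `kh - 2` colours saves a factor
`(kh - 2)/(kh - 1)`, and there are more than `|A|/log³ n` of them. A point whose palette has at
least `kh` colours costs at most a factor `r/(kh - 1)`, but there are at most `|A|/log⁴ n` of
them: otherwise the set `W` of these points is dense, so by the power-mean inequality over the
`O(n^d)` possible sums of `h` points it contains about `|W|^(k(h-1)+1)/n^(d(k-1))` solution sets
(tuples with a repeated entry being negligible), and each of them can be coloured rainbow from
its palettes, contradicting the bound on `R(P)`. Summing over the `2^o(|A|/log³ n)` templates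
gives the claim.
-/

theorem Finset.exists_injective_mem_of_card_le {α β : Type*} [DecidableEq β] {X : Finset α}
    {Q : α → Finset β} (hQ : ∀ x ∈ X, #X ≤ #(Q x)) :
    ∃ f : X → β, Function.Injective f ∧ ∀ x : X, f x ∈ Q x := by
  refine (Finset.all_card_le_biUnion_card_iff_exists_injective fun x : X => Q x).1 fun s => ?_
  obtain rfl | ⟨x, hx⟩ := s.eq_empty_or_nonempty
  · simp
  calc #s ≤ #X := by simpa using s.card_le_univ
    _ ≤ #(Q x) := hQ x x.2
    _ ≤ #(s.biUnion fun x : X => Q x) := card_le_card (subset_biUnion_of_mem (fun x : X => Q x) hx)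

section Rainbow

variable {d k h r : ℕ} {A : Finset (Fin d → ℕ)} {P : (Fin d → ℕ) → Finset (Fin r)}

lemma finite_isRainbowSub :
    Finite {S : Finset ((Fin d → ℕ) × Fin r) // IsRainbowSub d k h r A P S} := by
  refine Finite.of_injective (β := (A ×ˢ (univ : Finset (Fin r))).powerset)
    (fun S => ⟨S.1, mem_powerset.2 fun p hp => mem_product.2
      ⟨S.2.2.2.1 (mem_image_of_mem Prod.fst hp), mem_univ _⟩⟩) fun S T hST => ?_
  exact Subtype.ext (congrArg Subtype.val hST :)

lemma exists_isRainbowSub_image_fst {X : Finset (Fin d → ℕ)} (hXA : X ⊆ A)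
    (hX : IsBkhSol d k h X) (hP : ∀ x ∈ X, k * h ≤ #(P x)) :
    ∃ S, IsRainbowSub d k h r A P S ∧ S.image Prod.fst = X := by
  obtain ⟨f, hf, hfP⟩ := exists_injective_mem_of_card_le (Q := P) (X := X) (by
    simpa only [hX.1] using hP)
  have himage : (X.attach.image fun x => (x.1, f x)).image Prod.fst = X := by
    rw [image_image]; exact attach_image_val
  refine ⟨X.attach.image fun x => (x.1, f x), ⟨?_, ?_, ?_, ?_, ?_⟩, himage⟩
  · rintro _ hp _ hq hpq
    simp only [coe_image, coe_attach, Set.image_univ, Set.mem_range] at hp hq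
    obtain ⟨x, rfl⟩ := hp
    obtain ⟨y, rfl⟩ := hq
    obtain rfl : x = y := Subtype.ext hpq
    rfl
  · rintro _ hp _ hq hpq
    simp only [coe_image, coe_attach, Set.image_univ, Set.mem_range] at hp hq
    obtain ⟨x, rfl⟩ := hp
    obtain ⟨y, rfl⟩ := hq
    rw [hf hpq]
  · rwa [himage]
  · rwa [himage]
  · simp only [mem_image, mem_attach, true_and, forall_exists_index]
    rintro _ x rfl
    exact hfP x

lemma card_le_rainbowCount {𝒳 : Finset (Finset (Fin d → ℕ))}
    (h𝒳 : ∀ X ∈ 𝒳, X ⊆ A ∧ IsBkhSol d k h X ∧ ∀ x ∈ X, k * h ≤ #(P x)) :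
    #𝒳 ≤ rainbowCount d k h r A P := by
  have := finite_isRainbowSub (k := k) (h := h) (A := A) (P := P)
  choose S hS hSX using fun X : 𝒳 =>
    exists_isRainbowSub_image_fst (h𝒳 X X.2).1 (h𝒳 X X.2).2.1 (h𝒳 X X.2).2.2
  rw [← Fintype.card_coe, ← Nat.card_eq_fintype_card]
  refine Nat.card_le_card_of_injective (fun X => ⟨S X, hS X⟩) fun X Y hXY => ?_
  have := congrArg (fun S => (Subtype.val S).image Prod.fst) hXY
  simp only [hSX] at this
  exact Subtype.ext this

end Rainbow

section EqualSumTuples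

variable {V : Type*} [AddCommMonoid V] [DecidableEq V] {k h : ℕ} {W : Finset V}

def eqSumTuples (k h : ℕ) (W : Finset V) : Finset (Fin k → Fin h → V) :=
  (Fintype.piFinset fun _ => Fintype.piFinset fun _ => W).filter
    fun y => ∀ j₁ j₂, ∑ i, y j₁ i = ∑ i, y j₂ i

def rowsWithSum (h : ℕ) (W : Finset V) (s : V) : Finset (Fin h → V) :=
  (Fintype.piFinset fun _ => W).filter fun z => ∑ i, z i = s

def rowSums (h : ℕ) (W : Finset V) : Finset V :=
  (Fintype.piFinset fun _ : Fin h => W).image fun z => ∑ i, z i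

lemma mem_eqSumTuples {y : Fin k → Fin h → V} :
    y ∈ eqSumTuples k h W ↔ (∀ j i, y j i ∈ W) ∧ ∀ j₁ j₂, ∑ i, y j₁ i = ∑ i, y j₂ i := by
  simp [eqSumTuples, Fintype.mem_piFinset]

lemma card_eqSumTuples (hk : 0 < k) :
    #(eqSumTuples k h W) = ∑ s ∈ rowSums h W, #(rowsWithSum h W s) ^ k := by
  let j₀ : Fin k := ⟨0, hk⟩
  rw [card_eq_sum_card_fiberwise (f := fun y => ∑ i, y j₀ i) (t := rowSums h W)]
  · refine sum_congr rfl fun s _ => ?_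
    have hfiber : (eqSumTuples k h W).filter (fun y => ∑ i, y j₀ i = s) =
        Fintype.piFinset fun _ => rowsWithSum h W s := by
      ext y
      simp only [mem_filter, mem_eqSumTuples, rowsWithSum, Fintype.mem_piFinset]
      refine ⟨fun ⟨⟨hW, hsum⟩, hs⟩ j => ⟨hW j, (hsum j j₀).trans hs⟩,
        fun hy => ⟨⟨fun j => (hy j).1, fun j₁ j₂ => (hy j₁).2.trans (hy j₂).2.symm⟩, (hy j₀).2⟩⟩
    simp [hfiber]
  · intro y hy
    exact mem_image_of_mem _ (Fintype.mem_piFinset.2 ((mem_eqSumTuples.1 hy).1 j₀))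

lemma sum_card_rowsWithSum : ∑ s ∈ rowSums h W, #(rowsWithSum h W s) = #W ^ h := by
  have := card_eq_sum_card_fiberwise (s := Fintype.piFinset fun _ : Fin h => W)
    (f := fun z => ∑ i, z i) (t := rowSums h W) fun _ hz => by exact mem_image_of_mem _ hz
  simpa [rowsWithSum, Fintype.card_piFinset] using this.symm

/-- `#(eqSumTuples k h W) = ∑ₛ #(rowsWithSum h W s) ^ k` while `∑ₛ #(rowsWithSum h W s) = #W ^ h`,
so this is the power-mean inequality. -/
lemma pow_card_le_card_rowSums_mul (hk : 0 < k) :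
    (#W ^ h) ^ k ≤ #(rowSums h W) ^ (k - 1) * #(eqSumTuples k h W) := by
  obtain ⟨m, rfl⟩ : ∃ m, k = m + 1 := ⟨k - 1, by omega⟩
  rw [card_eqSumTuples hk, ← sum_card_rowsWithSum]
  exact pow_sum_le_card_mul_sum_pow (fun _ _ => Nat.zero_le _) m

lemma sum_eq_of_mem_eqSumTuples {y z : Fin k → Fin h → V} (hy : y ∈ eqSumTuples k h W)
    (hz : z ∈ eqSumTuples k h W) {j₀ : Fin k} (hj₀ : y j₀ = z j₀) (j : Fin k) :
    ∑ i, y j i = ∑ i, z j i := by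
  rw [(mem_eqSumTuples.1 hy).2 j j₀, hj₀, (mem_eqSumTuples.1 hz).2 j₀ j]

def injEqSumTuples (k h : ℕ) (W : Finset V) : Finset (Fin k → Fin h → V) :=
  (eqSumTuples k h W).filter fun y => Function.Injective (Function.uncurry y)

def solSets (k h : ℕ) (W : Finset V) : Finset (Finset V) :=
  (injEqSumTuples k h W).image fun y => univ.image (Function.uncurry y)

lemma card_injEqSumTuples_le : #(injEqSumTuples k h W) ≤ (k * h) ^ (k * h) * #(solSets k h W) := by
  refine card_le_mul_card_image _ _ fun X hX => ?_
  obtain ⟨y₀, hy₀, rfl⟩ := mem_image.1 hX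
  have hcard : #(univ.image (Function.uncurry y₀)) = k * h := by
    rw [card_image_of_injective _ (mem_filter.1 hy₀).2]
    simp
  calc #((injEqSumTuples k h W).filter fun y => univ.image (Function.uncurry y) =
          univ.image (Function.uncurry y₀))
      ≤ #(Fintype.piFinset fun _ : Fin k => Fintype.piFinset fun _ : Fin h =>
          univ.image (Function.uncurry y₀)) := by
        refine card_le_card fun y hy => ?_
        simp only [Fintype.mem_piFinset, ← (mem_filter.1 hy).2]
        exact fun j i => mem_image_of_mem _ (mem_univ (j, i))
    _ = (k * h) ^ (k * h) := by simp [hcard, ← pow_mul, mul_comm]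

end EqualSumTuples

lemma card_rowSums_le {d n : ℕ} (h : ℕ) {W : Finset (Fin d → ℕ)} (hW : W ⊆ grid n d) :
    #(rowSums h W) ≤ (h * n + 1) ^ d := by
  have hsub : rowSums h W ⊆ Fintype.piFinset fun _ : Fin d => range (h * n + 1) := by
    simp only [rowSums, image_subset_iff, Fintype.mem_piFinset, mem_range, Nat.lt_succ_iff]
    intro z hz ℓ
    rw [Finset.sum_apply]
    calc ∑ i, z i ℓ ≤ ∑ _i : Fin h, n := sum_le_sum fun i _ => by
          have := hW (hz i)
          simp only [grid, Fintype.mem_piFinset, mem_Icc] at this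
          exact (this ℓ).2
      _ = h * n := by simp
  simpa using card_le_card hsub

def DeterminedOff {V κ ι : Type*} (D : Finset (κ × ι)) (S : Finset (κ → ι → V)) : Prop :=
  ∀ y ∈ S, ∀ z ∈ S, (∀ q ∉ D, y q.1 q.2 = z q.1 q.2) → y = z

lemma card_le_pow_of_determinedOff {V κ ι : Type*} [Fintype κ] [Fintype ι] [DecidableEq κ]
    [DecidableEq ι] {W : Finset V} {S : Finset (κ → ι → V)} (hS : ∀ y ∈ S, ∀ j i, y j i ∈ W)
    {D : Finset (κ × ι)} (hD : DeterminedOff D S) :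
    #S ≤ #W ^ (Fintype.card κ * Fintype.card ι - #D) := by
  calc #S ≤ #(Fintype.piFinset fun _ : {q // q ∉ D} => W) :=
        card_le_card_of_injOn (fun y q => y q.1.1 q.1.2)
          (fun y hy => Fintype.mem_piFinset.2 fun q => hS y hy _ _)
          fun y hy z hz hyz => hD y hy z hz fun q hq => congrFun hyz ⟨q, hq⟩
    _ = #W ^ (Fintype.card κ * Fintype.card ι - #D) := by
      simp [Fintype.card_subtype_compl]

lemma eq_of_sum_eq_of_eqOn_compl {V ι : Type*} [AddCancelCommMonoid V] [IsAddTorsionFree V]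
    [Fintype ι] [DecidableEq ι] {E : Finset ι} (hE : E.Nonempty) {f g : ι → V} {a b : V}
    (hfa : ∀ i ∈ E, f i = a) (hgb : ∀ i ∈ E, g i = b) (hfg : ∀ i ∉ E, f i = g i)
    (hsum : ∑ i, f i = ∑ i, g i) : a = b := by
  rw [← sum_add_sum_compl E f, ← sum_add_sum_compl E g, sum_congr rfl hfa, sum_congr rfl hgb,
    sum_congr rfl fun i hi => hfg i (mem_compl.1 hi), sum_const, sum_const] at hsum
  exact nsmul_right_injective hE.card_pos.ne' (add_right_cancel hsum)

section Coincidences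

variable {V : Type*} [AddCancelCommMonoid V] [IsAddTorsionFree V] [DecidableEq V] {k h : ℕ}
  {W : Finset V}

/-- A coincidence between two different groups: the group of `p` is free, then one entry of
every other group is fixed by the common sum, and the entry at `q` is the one at `p`. -/
lemma exists_determinedOff_of_fst_ne (hh : 2 ≤ h) {p q : Fin k × Fin h} (hpq : p.1 ≠ q.1) :
    ∃ D : Finset (Fin k × Fin h), #D = k ∧
      DeterminedOff D ((eqSumTuples k h W).filter fun y => y p.1 p.2 = y q.1 q.2) := by
  have : Nontrivial (Fin h) := Fin.nontrivial_iff_two_le.2 hh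
  obtain ⟨i', hi'⟩ := exists_ne q.2
  let f : Fin k → Fin k × Fin h := fun j => if j = p.1 then q else (j, i')
  have hf : Function.Injective f := by
    intro j₁ j₂ hj
    simp only [f] at hj
    split_ifs at hj with h₁ h₂ h₂
    · exact h₁.trans h₂.symm
    · exact absurd (congrArg Prod.snd hj).symm hi'
    · exact absurd (congrArg Prod.snd hj) hi'
    · exact congrArg Prod.fst hj
  have hD : ∀ j i, (j, i) ∈ univ.image f → (j, i) = q ∨ (j ≠ p.1 ∧ i = i') := by
    simp only [mem_image, mem_univ, true_and, forall_exists_index]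
    intro j i j' hj'
    simp only [f] at hj'
    split_ifs at hj' with h
    · exact Or.inl hj'.symm
    · simp only [Prod.mk.injEq] at hj'
      exact Or.inr ⟨hj'.1 ▸ h, hj'.2.symm⟩
  refine ⟨univ.image f, by simp [card_image_of_injective _ hf], ?_⟩
  simp only [DeterminedOff, mem_filter]
  rintro y ⟨hy, hyc⟩ z ⟨hz, hzc⟩ hagree
  have hrow : y p.1 = z p.1 := funext fun i => hagree (p.1, i) fun hm => by
    rcases hD _ _ hm with h | ⟨h, -⟩
    · exact hpq (Prod.ext_iff.1 h).1
    · exact h rfl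
  have hoff : ∀ j i, i ≠ i' → y j i = z j i := by
    intro j i hi
    by_cases hm : (j, i) ∈ univ.image f
    · obtain rfl | ⟨-, h⟩ := hD j i hm
      · exact hyc.symm.trans ((congrFun hrow p.2).trans hzc)
      · exact absurd h hi
    · exact hagree (j, i) hm
  funext j i
  obtain rfl | hi := eq_or_ne i i'
  · refine eq_of_sum_eq_of_eqOn_compl (E := {i}) (singleton_nonempty i) (fun _ h => by
      rw [mem_singleton.1 h]) (fun _ h => by rw [mem_singleton.1 h]) (fun i₁ h => hoff j i₁ ?_)
      (sum_eq_of_mem_eqSumTuples hy hz hrow j)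
    exact fun h' => h (mem_singleton.2 h')
  · exact hoff j i hi

/-- A coincidence inside one group: another group is free, one entry of every remaining group is
fixed by the common sum, and twice the coinciding entry is fixed by it too. -/
lemma exists_determinedOff_of_fst_eq (hk : 2 ≤ k) {p q : Fin k × Fin h} (hpq : p ≠ q)
    (hg : p.1 = q.1) :
    ∃ D : Finset (Fin k × Fin h), #D = k ∧
      DeterminedOff D ((eqSumTuples k h W).filter fun y => y p.1 p.2 = y q.1 q.2) := by
  obtain ⟨g, i₁⟩ := p
  obtain ⟨g₂, i₂⟩ := q
  obtain rfl : g = g₂ := hg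
  have hi : i₁ ≠ i₂ := fun h => hpq (h ▸ rfl)
  have : Nontrivial (Fin k) := Fin.nontrivial_iff_two_le.2 hk
  obtain ⟨g', hg'⟩ := exists_ne g
  let f : Fin k → Fin k × Fin h := fun j => if j = g then (g, i₁) else if j = g' then (g, i₂)
    else (j, i₁)
  have hf : Function.Injective f := by
    intro j₁ j₂ hj
    simp only [f] at hj
    split_ifs at hj <;> simp_all
  have hD : ∀ j i, (j, i) ∈ univ.image f →
      j ≠ g' ∧ (j = g → i = i₁ ∨ i = i₂) ∧ (j ≠ g → i = i₁) := by
    simp only [mem_image, mem_univ, true_and, forall_exists_index]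
    intro j i j' hj'
    simp only [f] at hj'
    split_ifs at hj' <;> simp only [Prod.mk.injEq] at hj' <;> grind
  refine ⟨univ.image f, by simp [card_image_of_injective _ hf], ?_⟩
  simp only [DeterminedOff, mem_filter]
  rintro y ⟨hy, hyc⟩ z ⟨hz, hzc⟩ hagree
  have hrow : y g' = z g' := funext fun i => hagree (g', i) fun hm => (hD _ _ hm).1 rfl
  funext j i
  obtain rfl | hj := eq_or_ne j g
  · have hE : ∀ i, i ∉ ({i₁, i₂} : Finset (Fin h)) → y j i = z j i := fun i hi =>
      hagree (j, i) fun hm => hi (by simpa using (hD _ _ hm).2.1 rfl)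
    have hyz : y j i₁ = z j i₁ := by
      refine eq_of_sum_eq_of_eqOn_compl (E := {i₁, i₂}) (insert_nonempty _ _) ?_ ?_ hE
        (sum_eq_of_mem_eqSumTuples hy hz hrow j) <;> simp [hyc, hzc]
    by_cases hiE : i ∈ ({i₁, i₂} : Finset (Fin h))
    · rcases mem_insert.1 hiE with rfl | h
      · exact hyz
      · rw [mem_singleton.1 h, ← hyc, ← hzc, hyz]
    · exact hE i hiE
  · have hE : ∀ i, i ∉ ({i₁} : Finset (Fin h)) → y j i = z j i := fun i hi =>
      hagree (j, i) fun hm => hi (mem_singleton.2 ((hD _ _ hm).2.2 hj))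
    by_cases hiE : i = i₁
    · subst hiE
      exact eq_of_sum_eq_of_eqOn_compl (singleton_nonempty i) (by simp) (by simp) hE
        (sum_eq_of_mem_eqSumTuples hy hz hrow j)
    · exact hE i (by simpa using hiE)

lemma card_filter_apply_eq_le (hk : 2 ≤ k) (hh : 2 ≤ h) {p q : Fin k × Fin h} (hpq : p ≠ q) :
    #((eqSumTuples k h W).filter fun y => y p.1 p.2 = y q.1 q.2) ≤ #W ^ (k * (h - 1)) := by
  obtain ⟨D, hD, hdet⟩ : ∃ D : Finset (Fin k × Fin h), #D = k ∧
      DeterminedOff D ((eqSumTuples k h W).filter fun y => y p.1 p.2 = y q.1 q.2) := by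
    rcases eq_or_ne p.1 q.1 with hg | hg
    · exact exists_determinedOff_of_fst_eq hk hpq hg
    · exact exists_determinedOff_of_fst_ne hh hg
  have := card_le_pow_of_determinedOff
    (fun y hy => (mem_eqSumTuples.1 (mem_filter.1 hy).1).1) hdet
  simpa [hD, Nat.mul_sub_one] using this

end Coincidences

lemma card_eqSumTuples_le {V : Type*} [AddCancelCommMonoid V] [IsAddTorsionFree V] [DecidableEq V]
    {k h : ℕ} (hk : 2 ≤ k) (hh : 2 ≤ h) (W : Finset V) :
    #(eqSumTuples k h W) ≤ #(injEqSumTuples k h W) + (k * h) ^ 2 * #W ^ (k * (h - 1)) := by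
  rw [injEqSumTuples, ← card_filter_add_card_filter_not
    (fun y : Fin k → Fin h → V => Function.Injective (Function.uncurry y))]
  gcongr
  let pairs := (univ : Finset (Fin k × Fin h)).offDiag
  calc #((eqSumTuples k h W).filter fun y => ¬Function.Injective (Function.uncurry y))
      ≤ #(pairs.biUnion fun pq =>
          (eqSumTuples k h W).filter fun y => y pq.1.1 pq.1.2 = y pq.2.1 pq.2.2) := by
        refine card_le_card fun y hy => ?_
        obtain ⟨hy, hinj⟩ := mem_filter.1 hy
        obtain ⟨p, q, hpq, hne⟩ := Function.not_injective_iff.1 hinj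
        exact mem_biUnion.2 ⟨(p, q), by simp [pairs, hne], mem_filter.2 ⟨hy, hpq⟩⟩
    _ ≤ ∑ pq ∈ pairs, #((eqSumTuples k h W).filter fun y => y pq.1.1 pq.1.2 = y pq.2.1 pq.2.2) :=
        card_biUnion_le
    _ ≤ #pairs * #W ^ (k * (h - 1)) := sum_le_card_nsmul _ _ _ fun pq hpq =>
        card_filter_apply_eq_le hk hh (mem_offDiag.1 hpq).2.2
    _ ≤ (k * h) ^ 2 * #W ^ (k * (h - 1)) := by
        gcongr
        calc #pairs ≤ #(univ : Finset (Fin k × Fin h)) ^ 2 := by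
              simp only [pairs, offDiag_card, sq]; exact Nat.sub_le _ _
          _ = (k * h) ^ 2 := by simp

lemma subset_and_isBkhSol_of_mem_solSets {d k h : ℕ} {W X : Finset (Fin d → ℕ)}
    (hX : X ∈ solSets k h W) : X ⊆ W ∧ IsBkhSol d k h X := by
  obtain ⟨y, hy, rfl⟩ := mem_image.1 hX
  obtain ⟨hy, hinj⟩ := mem_filter.1 hy
  obtain ⟨hyW, hysum⟩ := mem_eqSumTuples.1 hy
  have hrow : ∀ j, Function.Injective (y j) := fun j i₁ i₂ h =>
    (Prod.ext_iff.1 (@hinj (j, i₁) (j, i₂) h)).2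
  refine ⟨image_subset_iff.2 fun q _ => hyW q.1 q.2, by simp [card_image_of_injective _ hinj],
    fun j => univ.image (y j), fun j => by simp [card_image_of_injective _ (hrow j)], ?_, ?_, ?_⟩
  · intro j₁ j₂ hj
    refine disjoint_left.2 fun v hv₁ hv₂ => hj ?_
    obtain ⟨i₁, -, rfl⟩ := mem_image.1 hv₁
    obtain ⟨i₂, -, hi⟩ := mem_image.1 hv₂
    exact (Prod.ext_iff.1 (@hinj (j₂, i₂) (j₁, i₁) hi)).1.symm
  · ext v
    simp [Function.uncurry]
  · intro j₁ j₂
    rw [sum_image fun i₁ _ i₂ _ h => hrow j₁ h, sum_image fun i₁ _ i₂ _ h => hrow j₂ h]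
    exact hysum j₁ j₂

/-- Counting equal-sum tuples in two ways: from below through the few possible row sums,
from above through the solution sets they enumerate and the few tuples with a repeated entry. -/
lemma pow_card_le_card_solSets {d k h n : ℕ} (hk : 2 ≤ k) (hh : 2 ≤ h)
    {W : Finset (Fin d → ℕ)} (hW : W ⊆ grid n d) :
    (#W ^ h) ^ k ≤ ((h * n + 1) ^ d) ^ (k - 1) *
      ((k * h) ^ (k * h) * #(solSets k h W) + (k * h) ^ 2 * #W ^ (k * (h - 1))) :=
  calc (#W ^ h) ^ k ≤ #(rowSums h W) ^ (k - 1) * #(eqSumTuples k h W) :=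
        pow_card_le_card_rowSums_mul (by omega)
    _ ≤ ((h * n + 1) ^ d) ^ (k - 1) *
          (#(injEqSumTuples k h W) + (k * h) ^ 2 * #W ^ (k * (h - 1))) := by
        gcongr
        · exact card_rowSums_le h hW
        · exact card_eqSumTuples_le hk hh W
    _ ≤ _ := by
        gcongr
        exact card_injEqSumTuples_le

lemma pow_le_mul_card_solSets_of_dense {d k h n : ℕ} (hk : 2 ≤ k) (hh : 2 ≤ h) (hn : 0 < n)
    {W : Finset (Fin d → ℕ)} (hW : W ⊆ grid n d) {M : ℝ} (hM : (n : ℝ) ^ d ≤ M * #W)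
    (hlarge : 2 * ((k : ℝ) * h) ^ 2 * (((h : ℝ) + 1) ^ d * M) ^ (k - 1) ≤ #W) :
    (#W : ℝ) ^ (k * (h - 1) + 1) ≤
      2 * ((k : ℝ) * h) ^ (k * h) * (((h : ℝ) + 1) ^ d * M) ^ (k - 1) * #(solSets k h W) := by
  set w : ℝ := (#W : ℝ)
  set G : ℝ := ((h : ℝ) + 1) ^ d * M
  set u : ℝ := w ^ (k * (h - 1))
  have hw : 0 < w := lt_of_le_of_ne (Nat.cast_nonneg _) fun h0 => by
    rw [← h0, mul_zero] at hM
    exact (pow_pos (Nat.cast_pos.2 hn) d).not_ge hM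
  have hT : (((h * n + 1 : ℕ) : ℝ) ^ d) ^ (k - 1) ≤ G ^ (k - 1) * w ^ (k - 1) := by
    rw [← mul_pow]
    gcongr
    calc ((h * n + 1 : ℕ) : ℝ) ^ d ≤ (((h : ℝ) + 1) * n) ^ d := by
          gcongr
          push_cast
          nlinarith [(Nat.one_le_cast (α := ℝ)).2 hn]
      _ ≤ G * w := by rw [mul_pow, mul_assoc]; gcongr
  have hcount : (w ^ h) ^ k ≤ (((h * n + 1 : ℕ) : ℝ) ^ d) ^ (k - 1) *
      (((k : ℝ) * h) ^ (k * h) * #(solSets k h W) + ((k : ℝ) * h) ^ 2 * u) := by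
    simp only [w, u]
    exact_mod_cast pow_card_le_card_solSets (d := d) hk hh hW
  have hsplit : (w ^ h) ^ k = w ^ (k - 1) * (u * w) := by
    obtain ⟨h', rfl⟩ : ∃ h', h = h' + 1 := ⟨h - 1, by omega⟩
    obtain ⟨k', rfl⟩ : ∃ k', k = k' + 1 := ⟨k - 1, by omega⟩
    simp only [u, Nat.add_sub_cancel, ← pow_mul, ← pow_succ, ← pow_add]
    ring_nf
  have hmain : u * w ≤ G ^ (k - 1) * (((k : ℝ) * h) ^ (k * h) * #(solSets k h W) +
      ((k : ℝ) * h) ^ 2 * u) := by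
    refine le_of_mul_le_mul_left ?_ (pow_pos hw (k - 1))
    calc w ^ (k - 1) * (u * w) ≤ (G ^ (k - 1) * w ^ (k - 1)) *
          (((k : ℝ) * h) ^ (k * h) * #(solSets k h W) + ((k : ℝ) * h) ^ 2 * u) := by
          rw [← hsplit]
          exact hcount.trans (by gcongr)
      _ = _ := by ring
  have hbad := mul_le_mul_of_nonneg_left hlarge (pow_nonneg hw.le (k * (h - 1)))
  rw [pow_succ]
  nlinarith

lemma pow_card_filter_le_rainbowCount {d k h r n : ℕ} (hk : 2 ≤ k) (hh : 2 ≤ h) (hn : 0 < n)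
    {A : Finset (Fin d → ℕ)} (hA : A ⊆ grid n d) {P : (Fin d → ℕ) → Finset (Fin r)} {L : ℝ}
    (hL : 0 < L)
    (hnL : 2 * ((k : ℝ) * h) ^ 2 * ((h : ℝ) + 1) ^ (d * (k - 1)) * L ^ (5 * k) ≤ (n : ℝ) ^ d)
    (hdense : (n : ℝ) ^ d ≤ L ^ 5 * #(A.filter fun x => k * h ≤ #(P x))) :
    (#(A.filter fun x => k * h ≤ #(P x)) : ℝ) ^ (k * (h - 1) + 1) ≤
      2 * ((k : ℝ) * h) ^ (k * h) * (((h : ℝ) + 1) ^ (d * (k - 1)) * L ^ (5 * (k - 1))) *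
        rainbowCount d k h r A P := by
  set W := A.filter fun x => k * h ≤ #(P x)
  have hG : (((h : ℝ) + 1) ^ d * L ^ 5) ^ (k - 1) =
      ((h : ℝ) + 1) ^ (d * (k - 1)) * L ^ (5 * (k - 1)) := by
    rw [mul_pow, ← pow_mul, ← pow_mul]
  rw [← hG]
  refine (pow_le_mul_card_solSets_of_dense hk hh hn ((filter_subset _ A).trans hA) hdense ?_).trans
    ?_
  · rw [hG]
    refine le_of_mul_le_mul_right ?_ (pow_pos hL 5)
    calc 2 * ((k : ℝ) * h) ^ 2 * (((h : ℝ) + 1) ^ (d * (k - 1)) * L ^ (5 * (k - 1))) * L ^ 5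
        = 2 * ((k : ℝ) * h) ^ 2 * ((h : ℝ) + 1) ^ (d * (k - 1)) * L ^ (5 * k) := by
          rw [show 5 * k = 5 * (k - 1) + 5 by omega, pow_add]; ring
      _ ≤ #W * L ^ 5 := by rw [mul_comm (#W : ℝ)]; exact hnL.trans hdense
  · gcongr
    exact_mod_cast card_le_rainbowCount fun X hX => by
      obtain ⟨hXW, hXsol⟩ := subset_and_isBkhSol_of_mem_solSets hX
      exact ⟨hXW.trans (filter_subset _ A), hXsol, fun x hx => (mem_filter.1 (hXW hx)).2⟩

/-- If many points had large palettes, supersaturation would give more rainbow solutions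
than `R(P)` allows. -/
lemma card_filter_le_card_div_pow_four {d k h r n : ℕ} (hk : 2 ≤ k) (hh : 2 ≤ h) (hn : 0 < n)
    {A : Finset (Fin d → ℕ)} (hA : A ⊆ grid n d) {P : (Fin d → ℕ) → Finset (Fin r)} {L : ℝ}
    (hL : 2 * ((k : ℝ) * h) ^ (k * h) * ((h : ℝ) + 1) ^ (d * (k - 1)) < L)
    (hnL : 2 * ((k : ℝ) * h) ^ 2 * ((h : ℝ) + 1) ^ (d * (k - 1)) * L ^ (5 * k) ≤ (n : ℝ) ^ d)
    (hAcard : (n : ℝ) ^ d / L ≤ #A)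
    (hR : (rainbowCount d k h r A P : ℝ) ≤ (#A : ℝ) ^ (k * (h - 1) + 1) / L ^ (5 * k * h)) :
    (#(A.filter fun x => k * h ≤ #(P x)) : ℝ) ≤ #A / L ^ 4 := by
  set W := A.filter fun x => k * h ≤ #(P x)
  set K := k * (h - 1) + 1
  set C : ℝ := ((h : ℝ) + 1) ^ (d * (k - 1))
  set R : ℝ := (rainbowCount d k h r A P : ℝ)
  have hC : 1 ≤ C := one_le_pow₀ (by linarith [(Nat.cast_nonneg h : (0 : ℝ) ≤ h)])
  have hkh : (1 : ℝ) ≤ (k : ℝ) * h := by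
    exact_mod_cast Nat.one_le_iff_ne_zero.2 (by positivity)
  have hL1 : 1 < L := lt_of_le_of_lt (by nlinarith [one_le_pow₀ (n := k * h) hkh]) hL
  have hL0 : 0 < L := one_pos.trans hL1
  by_contra! hW
  have hnA : (n : ℝ) ^ d ≤ L * #A := by rwa [div_le_iff₀ hL0, mul_comm] at hAcard
  have hAW : (#A : ℝ) ≤ L ^ 4 * #W := by rw [div_lt_iff₀ (by positivity), mul_comm] at hW; linarith
  have hsol := pow_card_filter_le_rainbowCount hk hh hn hA hL0 hnL (P := P) (by
    calc (n : ℝ) ^ d ≤ L * (L ^ 4 * #W) := hnA.trans (by gcongr)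
      _ = L ^ 5 * #W := by ring)
  have hRW : R * L ^ (5 * k * h) ≤ (L ^ 4) ^ K * (#W : ℝ) ^ K := by
    rw [← le_div_iff₀ (by positivity), ← mul_pow]
    exact hR.trans (by gcongr)
  have hexp : L ^ (5 * k * h) = L ^ (5 * (k - 1)) * (L ^ 4) ^ K * L ^ K := by
    obtain ⟨h', rfl⟩ : ∃ h', h = h' + 1 := ⟨h - 1, by omega⟩
    obtain ⟨k', rfl⟩ : ∃ k', k = k' + 1 := ⟨k - 1, by omega⟩
    simp only [K, Nat.add_sub_cancel, ← pow_mul, ← pow_add]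
    ring_nf
  have hLK : L ^ K ≤ 2 * ((k : ℝ) * h) ^ (k * h) * C := by
    have hWK : (0 : ℝ) < (#W : ℝ) ^ K := pow_pos (lt_of_le_of_lt (by positivity) hW) K
    refine le_of_mul_le_mul_right ?_ (by positivity :
      (0 : ℝ) < L ^ (5 * (k - 1)) * (L ^ 4) ^ K * (#W : ℝ) ^ K)
    calc L ^ K * (L ^ (5 * (k - 1)) * (L ^ 4) ^ K * (#W : ℝ) ^ K)
        = (#W : ℝ) ^ K * L ^ (5 * k * h) := by rw [hexp]; ring
      _ ≤ 2 * ((k : ℝ) * h) ^ (k * h) * (C * L ^ (5 * (k - 1))) * (R * L ^ (5 * k * h)) := by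
          rw [← mul_assoc]; gcongr
      _ ≤ 2 * ((k : ℝ) * h) ^ (k * h) * (C * L ^ (5 * (k - 1))) * ((L ^ 4) ^ K * (#W : ℝ) ^ K) := by
          gcongr
      _ = 2 * ((k : ℝ) * h) ^ (k * h) * C * (L ^ (5 * (k - 1)) * (L ^ 4) ^ K * (#W : ℝ) ^ K) := by
          ring
  linarith [le_self_pow₀ hL1.le (show K ≠ 0 by omega)]

lemma natCard_exists_forall_mem_le {α β : Type*} (A : Finset α) (𝒟 : Finset (α → Finset β)) :
    Nat.card {c : A → β // ∃ P ∈ 𝒟, ∀ x : A, c x ∈ P x} ≤ ∑ P ∈ 𝒟, ∏ x ∈ A, #(P x) := by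
  classical
  calc Nat.card {c : A → β // ∃ P ∈ 𝒟, ∀ x : A, c x ∈ P x}
      ≤ Nat.card (𝒟.biUnion fun P => Fintype.piFinset fun x : A => P x) :=
        Nat.card_le_card_of_injective
          (fun c => ⟨c.1, mem_biUnion.2 (c.2.imp fun _ h => ⟨h.1, Fintype.mem_piFinset.2 h.2⟩)⟩)
          fun c c' h => Subtype.ext (congrArg Subtype.val h :)
    _ ≤ ∑ P ∈ 𝒟, ∏ x ∈ A, #(P x) := by
        rw [Nat.card_eq_finsetCard]
        refine card_biUnion_le.trans_eq (sum_congr rfl fun P _ => ?_)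
        rw [Fintype.card_piFinset, univ_eq_attach, prod_attach A fun x => #(P x)]

/-- Against the factor `m - 1` per point, a palette of at most `m - 2` colours saves
`(m - 2)/(m - 1) = 2 ^ (-smallPaletteRate m)`, and one of at most `r` colours costs at most
`r/(m - 1) = 2 ^ largePaletteRate m r`. -/
noncomputable def smallPaletteRate (m : ℕ) : ℝ := Real.logb 2 (((m : ℝ) - 1) / ((m : ℝ) - 2))

noncomputable def largePaletteRate (m r : ℕ) : ℝ := Real.logb 2 ((r : ℝ) / ((m : ℝ) - 1))

lemma smallPaletteRate_pos {m : ℕ} (hm : 3 ≤ m) : 0 < smallPaletteRate m := by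
  have : (3 : ℝ) ≤ m := by exact_mod_cast hm
  exact Real.logb_pos one_lt_two (by rw [lt_div_iff₀ (by linarith)]; linarith)

lemma largePaletteRate_nonneg {m r : ℕ} (hm : 2 ≤ m) (hmr : m ≤ r) : 0 ≤ largePaletteRate m r := by
  have : (2 : ℝ) ≤ m := by exact_mod_cast hm
  refine Real.logb_nonneg one_lt_two ?_
  rw [le_div_iff₀ (by linarith), one_mul]
  exact (sub_le_self _ one_pos.le).trans (by exact_mod_cast hmr)

lemma prod_card_le_pow_mul_rpow {α β : Type*} [Fintype β] {m : ℕ} (hm : 3 ≤ m) (A : Finset α)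
    (P : α → Finset β) :
    ∏ x ∈ A, (#(P x) : ℝ) ≤ ((m : ℝ) - 1) ^ #A *
      2 ^ (largePaletteRate m (Fintype.card β) * #(A.filter fun x => m ≤ #(P x)) -
        smallPaletteRate m * #(A.filter fun x => #(P x) ≤ m - 2)) := by
  have hm' : (3 : ℝ) ≤ m := by exact_mod_cast hm
  have hm1 : (0 : ℝ) < (m : ℝ) - 1 := by linarith
  have hm2 : (0 : ℝ) < (m : ℝ) - 2 := by linarith
  let e : α → ℝ := fun x => largePaletteRate m (Fintype.card β) * (if m ≤ #(P x) then 1 else 0) -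
    smallPaletteRate m * (if #(P x) ≤ m - 2 then 1 else 0)
  have hpoint : ∀ x ∈ A, (#(P x) : ℝ) ≤ ((m : ℝ) - 1) * 2 ^ e x := by
    intro x _
    by_cases hlarge : m ≤ #(P x)
    · have hcard : (#(P x) : ℝ) ≤ Fintype.card β := by exact_mod_cast card_le_univ _
      have hβ : (0 : ℝ) < Fintype.card β :=
        hcard.trans_lt' (by exact_mod_cast (show 0 < #(P x) by omega))
      simp only [e, if_pos hlarge, if_neg (show ¬#(P x) ≤ m - 2 by omega), mul_one, mul_zero,
        sub_zero, largePaletteRate]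
      rwa [Real.rpow_logb two_pos (by norm_num) (by positivity), mul_div_cancel₀ _ hm1.ne']
    by_cases hsmall : #(P x) ≤ m - 2
    · simp only [e, if_neg hlarge, if_pos hsmall, mul_one, mul_zero, zero_sub, smallPaletteRate]
      rw [Real.rpow_neg two_pos.le, Real.rpow_logb two_pos (by norm_num) (by positivity), inv_div,
        mul_div_cancel₀ _ hm1.ne']
      have : (#(P x) : ℝ) ≤ ((m - 2 : ℕ) : ℝ) := by exact_mod_cast hsmall
      rwa [Nat.cast_sub (by omega), Nat.cast_two] at this
    · simp only [e, if_neg hlarge, if_neg hsmall, mul_zero, sub_zero, Real.rpow_zero, mul_one]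
      have : (#(P x) : ℝ) ≤ ((m - 1 : ℕ) : ℝ) := by exact_mod_cast (show #(P x) ≤ m - 1 by omega)
      rwa [Nat.cast_sub (by omega), Nat.cast_one] at this
  calc ∏ x ∈ A, (#(P x) : ℝ) ≤ ∏ x ∈ A, (((m : ℝ) - 1) * 2 ^ e x) :=
        prod_le_prod (fun _ _ => Nat.cast_nonneg _) hpoint
    _ = _ := by
        rw [prod_mul_distrib, prod_const, ← Real.rpow_sum_of_pos two_pos]
        simp only [e, sum_sub_distrib, ← mul_sum, sum_boole]

lemma eventually_logb_pow_le_mul_rpow {C : ℝ} (hC : 0 < C) (m : ℕ) {s : ℝ} (hs : 0 < s) :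
    ∀ᶠ x : ℝ in Filter.atTop, Real.logb 2 x ^ m ≤ C * x ^ s := by
  have hlog2 : 0 < Real.log 2 := Real.log_pos one_lt_two
  filter_upwards [(isLittleO_log_rpow_rpow_atTop (m : ℝ) hs).def
      (by positivity : 0 < C * Real.log 2 ^ m),
    Filter.eventually_ge_atTop 1] with x hx hx1
  rw [Real.norm_of_nonneg (Real.rpow_nonneg (Real.log_nonneg hx1) _),
    Real.norm_of_nonneg (Real.rpow_nonneg (by linarith) _), Real.rpow_natCast] at hx
  rw [Real.logb, div_pow, div_le_iff₀ (by positivity)]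
  linarith

lemma add_sub_le_neg_half {a x δ L β γ : ℝ} (ha : 0 ≤ a) (hx : 0 < x) (hL : 0 < L)
    (hxL : L ^ 13 ≤ β / 4 * x ^ δ) (hγ : 4 * γ ≤ β * L) :
    a * x ^ (-δ) * L ^ 10 + (γ * (a / L ^ 4) - β * (a / L ^ 3)) ≤ -(β / 2 * a / L ^ 3) := by
  have hxδ : 0 < x ^ δ := Real.rpow_pos_of_pos hx δ
  have h1 : a * x ^ (-δ) * L ^ 10 ≤ β / 4 * (a / L ^ 3) := by
    have := mul_le_mul_of_nonneg_left hxL ha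
    calc a * x ^ (-δ) * L ^ 10 = a * L ^ 13 / (x ^ δ * L ^ 3) := by
          rw [Real.rpow_neg hx.le]; field_simp
      _ ≤ a * (β / 4 * x ^ δ) / (x ^ δ * L ^ 3) := by gcongr
      _ = β / 4 * (a / L ^ 3) := by field_simp
  have h2 : γ * (a / L ^ 4) ≤ β / 4 * (a / L ^ 3) :=
    calc γ * (a / L ^ 4) = 4 * γ * a / (4 * L ^ 4) := by ring
      _ ≤ β * L * a / (4 * L ^ 4) := by gcongr
      _ = β / 4 * (a / L ^ 3) := by field_simp
  have h3 : β / 2 * a / L ^ 3 = β * (a / L ^ 3) - 2 * (β / 4 * (a / L ^ 3)) := by ring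
  linarith

lemma natCard_subtemplate_colorings_le {d k h r n : ℕ} (hk : 2 ≤ k) (hh : 2 ≤ h) (hr : k * h ≤ r)
    (hn : 0 < n) {A : Finset (Fin d → ℕ)} (hA : A ⊆ grid n d)
    {𝒟 : Finset ((Fin d → ℕ) → Finset (Fin r))} {L δ : ℝ}
    (hL : 2 * ((k : ℝ) * h) ^ (k * h) * ((h : ℝ) + 1) ^ (d * (k - 1)) < L)
    (hnL : 2 * ((k : ℝ) * h) ^ 2 * ((h : ℝ) + 1) ^ (d * (k - 1)) * L ^ (5 * k) ≤ (n : ℝ) ^ d)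
    (hLr : 4 * largePaletteRate (k * h) r ≤ smallPaletteRate (k * h) * L)
    (hLn : L ^ 13 ≤ smallPaletteRate (k * h) / 4 * (n : ℝ) ^ δ)
    (hAcard : (n : ℝ) ^ d / L ≤ #A)
    (hR : ∀ P ∈ 𝒟, (rainbowCount d k h r A P : ℝ) ≤ (#A : ℝ) ^ (k * (h - 1) + 1) / L ^ (5 * k * h))
    (hsmall : ∀ P ∈ 𝒟, (#A : ℝ) / L ^ 3 < #(A.filter fun x => #(P x) ≤ k * h - 2))
    (h𝒟 : (#𝒟 : ℝ) ≤ 2 ^ (#A * (n : ℝ) ^ (-δ) * L ^ 10)) :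
    (Nat.card {c : A → Fin r // ¬HasRainbow d k h r A c ∧ ∃ P ∈ 𝒟, ∀ x : A, c x ∈ P x} : ℝ) ≤
      2 ^ (-(smallPaletteRate (k * h) / 2 * #A / L ^ 3)) * ((k * h : ℝ) - 1) ^ #A := by
  set β := smallPaletteRate (k * h)
  set γ := largePaletteRate (k * h) r
  have hkh : 4 ≤ k * h := Nat.mul_le_mul hk hh
  have hkh1 : (0 : ℝ) ≤ (k * h : ℝ) - 1 := by
    have : (4 : ℝ) ≤ k * h := by exact_mod_cast hkh
    linarith
  have hβ : 0 < β := smallPaletteRate_pos (by omega)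
  have hL0 : 0 < L := lt_of_le_of_lt (by positivity) hL
  have hlarge : ∀ P ∈ 𝒟, (#(A.filter fun x => k * h ≤ #(P x)) : ℝ) ≤ #A / L ^ 4 :=
    fun P hP => card_filter_le_card_div_pow_four hk hh hn hA hL hnL hAcard (hR P hP)
  have hcount : Nat.card {c : A → Fin r // ¬HasRainbow d k h r A c ∧ ∃ P ∈ 𝒟, ∀ x : A, c x ∈ P x} ≤
      ∑ P ∈ 𝒟, ∏ x ∈ A, #(P x) :=
    (Nat.card_mono (Set.toFinite _) fun _ hc => hc.2).trans (natCard_exists_forall_mem_le A 𝒟)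
  calc (Nat.card {c : A → Fin r // ¬HasRainbow d k h r A c ∧ ∃ P ∈ 𝒟, ∀ x : A, c x ∈ P x} : ℝ)
      ≤ ∑ P ∈ 𝒟, ∏ x ∈ A, (#(P x) : ℝ) := by exact_mod_cast hcount
    _ ≤ ∑ P ∈ 𝒟, ((k * h : ℝ) - 1) ^ #A * 2 ^ (γ * (#A / L ^ 4) - β * (#A / L ^ 3)) := by
        refine sum_le_sum fun P hP =>
          (prod_card_le_pow_mul_rpow (m := k * h) (by omega) A P).trans ?_
        push_cast [Fintype.card_fin]
        refine mul_le_mul_of_nonneg_left (Real.rpow_le_rpow_of_exponent_le one_le_two ?_)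
          (pow_nonneg hkh1 _)
        exact sub_le_sub (mul_le_mul_of_nonneg_left (hlarge P hP) (largePaletteRate_nonneg
          (by omega) hr)) (mul_le_mul_of_nonneg_left (hsmall P hP).le hβ.le)
    _ ≤ 2 ^ (#A * (n : ℝ) ^ (-δ) * L ^ 10) *
          (((k * h : ℝ) - 1) ^ #A * 2 ^ (γ * (#A / L ^ 4) - β * (#A / L ^ 3))) := by
        rw [sum_const, nsmul_eq_mul]
        exact mul_le_mul_of_nonneg_right h𝒟 (by positivity)
    _ = 2 ^ (#A * (n : ℝ) ^ (-δ) * L ^ 10 + (γ * (#A / L ^ 4) - β * (#A / L ^ 3))) *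
          ((k * h : ℝ) - 1) ^ #A := by
        rw [Real.rpow_add two_pos]; ring
    _ ≤ 2 ^ (-(β / 2 * #A / L ^ 3)) * ((k * h : ℝ) - 1) ^ #A :=
        mul_le_mul_of_nonneg_right (Real.rpow_le_rpow_of_exponent_le one_le_two
          (add_sub_le_neg_half (Nat.cast_nonneg _) (by exact_mod_cast hn) hL0 hLn hLr))
          (pow_nonneg hkh1 _)

/-- the number of rainbow-free colorings lying below some bad template is
exponentially small. -/
theorem stmt16 (d k h r : ℕ) (hd : 1 ≤ d) (hk : 2 ≤ k) (hh : 2 ≤ h) (hr : k * h ≤ r) :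
    ∃ c : ℝ, 0 < c ∧ ∃ N : ℕ, ∀ n : ℕ, N ≤ n → ∀ A : Finset (Fin d → ℕ), A ⊆ grid n d →
      (n : ℝ) ^ d / Real.logb 2 n ≤ (A.card : ℝ) →
      ∀ 𝒟 : Finset ((Fin d → ℕ) → Finset (Fin r)),
        (∀ P ∈ 𝒟, (rainbowCount d k h r A P : ℝ) ≤
          (A.card : ℝ) ^ (k * (h - 1) + 1) / (Real.logb 2 n) ^ (5 * k * h)) →
        (∀ P ∈ 𝒟, (A.card : ℝ) / (Real.logb 2 n) ^ 3 <
          ((A.filter fun x => (P x).card ≤ k * h - 2).card : ℝ)) →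
        ((𝒟.card : ℝ) ≤ 2 ^ ((A.card : ℝ) *
          (n : ℝ) ^ (-(((k * (h - 1) * d : ℕ) : ℝ) / ((k * h - 1 : ℕ) : ℝ))) *
          (Real.logb 2 n) ^ 10)) →
        (Nat.card {c' : ↥A → Fin r // ¬ HasRainbow d k h r A c' ∧
            ∃ P ∈ 𝒟, ∀ x : ↥A, c' x ∈ P x.val} : ℝ) ≤
          2 ^ (-(c * (A.card : ℝ) / (Real.logb 2 n) ^ 3)) * ((k * h : ℝ) - 1) ^ A.card := by
  have hkh : 4 ≤ k * h := Nat.mul_le_mul hk hh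
  have hβ : 0 < smallPaletteRate (k * h) := smallPaletteRate_pos (by omega)
  set C : ℝ := ((h : ℝ) + 1) ^ (d * (k - 1))
  have hδ : (0 : ℝ) < ((k * (h - 1) * d : ℕ) : ℝ) / ((k * h - 1 : ℕ) : ℝ) :=
    div_pos (Nat.cast_pos.2 (Nat.mul_pos (Nat.mul_pos (by omega) (by omega)) (by omega)))
      (Nat.cast_pos.2 (by omega))
  have hlogb := Real.tendsto_logb_atTop one_lt_two
  obtain ⟨N, hN⟩ := Filter.eventually_atTop.1 <| tendsto_natCast_atTop_atTop.eventually <|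
    (hlogb.eventually_gt_atTop (2 * ((k : ℝ) * h) ^ (k * h) * C)).and <|
    (hlogb.eventually_ge_atTop (4 * largePaletteRate (k * h) r / smallPaletteRate (k * h))).and <|
    (eventually_logb_pow_le_mul_rpow (C := 1 / (2 * ((k : ℝ) * h) ^ 2 * C)) (by positivity) (5 * k)
      one_pos).and
      (eventually_logb_pow_le_mul_rpow (C := smallPaletteRate (k * h) / 4) (by positivity) 13 hδ)
  refine ⟨smallPaletteRate (k * h) / 2, by positivity, N, fun n hn A hA hAcard 𝒟 hR hsmall h𝒟 => ?_⟩
  obtain ⟨hL, hLr, h5k, h13⟩ := hN n hn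
  have hn0 : 0 < n := Nat.pos_of_ne_zero fun h0 => by
    simp only [h0, Nat.cast_zero, Real.logb_zero] at hL
    exact hL.not_ge (by positivity)
  have hnL : 2 * ((k : ℝ) * h) ^ 2 * C * Real.logb 2 n ^ (5 * k) ≤ (n : ℝ) ^ d := by
    rw [Real.rpow_one, one_div_mul_eq_div, le_div_iff₀' (by positivity)] at h5k
    exact h5k.trans (le_self_pow₀ (by exact_mod_cast hn0) (by omega))
  exact natCard_subtemplate_colorings_le hk hh hr hn0 hA hL hnL
    (by rwa [div_le_iff₀ hβ, mul_comm (Real.logb 2 n)] at hLr) h13 hAcard hR hsmall h𝒟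
end

section
/- For all integers d ≥ 1, k ≥ 2 and h ≥ 2, there exist a constant c > 0 and an integer N such that for all n ≥ N, every subset A ⊆ [n]^d with |A| ≥ n^d − n^d/log n, every subset M ⊆ A with |M| ≤ |A|/(log n)^2, and every point v ∈ A, there exists a family ℱ' of at least c·n^d pairwise disjoint (kh−1)-element subsets of A \ M such that each F ∈ ℱ' can be written as F = {x_{1,2},...,x_{1,h}} ∪ {x_{ℓ,i} : 2 ≤ ℓ ≤ k, 1 ≤ i ≤ h} with v + Σ_{i=2}^{h} x_{1,i} = Σ_{i=1}^{h} x_{2,i} = ⋯ = Σ_{i=1}^{h} x_{k,i}. -/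
open Finset

/-- `F` is a `v`-configuration: it can be written as
`F = {x_{1,2},…,x_{1,h}} ∪ {x_{ℓ,i} : 2 ≤ ℓ ≤ k, 1 ≤ i ≤ h}` with
`v + Σ_{i=2}^h x_{1,i} = Σ_{i=1}^h x_{2,i} = ⋯ = Σ_{i=1}^h x_{k,i}`. -/
def IsVConfig (d k h : ℕ) (v : Fin d → ℕ) (F : Finset (Fin d → ℕ)) : Prop :=
  ∃ x : Fin k → Fin h → (Fin d → ℕ),
    (∀ (ℓ : Fin k) (i : Fin h), (ℓ : ℕ) = 0 ∧ (i : ℕ) = 0 → x ℓ i = v) ∧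
    (∀ ℓ₁ ℓ₂ : Fin k, ∑ i, x ℓ₁ i = ∑ i, x ℓ₂ i) ∧
    F = Finset.image (fun p : Fin k × Fin h => x p.1 p.2)
          (Finset.univ.filter fun p : Fin k × Fin h => ¬((p.1 : ℕ) = 0 ∧ (p.2 : ℕ) = 0))


namespace S17

def c0 (h : ℕ) : ℕ := ∑ i ∈ Finset.range (h-1), i

def Gc (k h : ℕ) : ℕ := k*h + c0 h + (h-1)*h*k + 1

def uu (h ℓ i : ℕ) : ℕ := if ℓ = 0 then (if i = 0 then 0 else 2) else if i = 0 then h-1 else 1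

def gg (k h ℓ i : ℕ) : ℕ := if i = h-1 then Gc k h - ((h-1)*h*ℓ + c0 h) else ℓ*h + i

def Dc (k h : ℕ) : ℕ := Gc k h + 1

def Ec (k h : ℕ) : ℕ := 4 * (Dc k h) * h

lemma uu_le {h : ℕ} (hh : 2 ≤ h) (ℓ i : ℕ) : uu h ℓ i ≤ h := by
  unfold uu; split <;> split <;> omega

lemma uu_pos {h ℓ i : ℕ} (hh : 2 ≤ h) (hne : ¬(ℓ = 0 ∧ i = 0)) : 1 ≤ uu h ℓ i := by
  unfold uu; split <;> split <;> omega

lemma uu00 (h : ℕ) : uu h 0 0 = 0 := by simp [uu]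

lemma gg00 {k h : ℕ} (hh : 2 ≤ h) : gg k h 0 0 = 0 := by
  unfold gg; rw [if_neg (by omega)]; simp

lemma gg_sub_le {k h : ℕ} (hh : 2 ≤ h) {ℓ : ℕ} (hℓ : ℓ < k) :
    (h-1)*h*ℓ + c0 h + (k*h + 1) ≤ Gc k h := by
  have le1 : (h-1)*h*ℓ + (h-1)*h ≤ (h-1)*h*k := by
    have : (h-1)*h*(ℓ+1) ≤ (h-1)*h*k := Nat.mul_le_mul_left _ (by omega)
    calc (h-1)*h*ℓ + (h-1)*h = (h-1)*h*(ℓ+1) := by ring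
    _ ≤ (h-1)*h*k := this
  have h2 : 2 ≤ (h-1)*h := by
    have : 1*2 ≤ (h-1)*h := Nat.mul_le_mul (by omega) (by omega)
    omega
  unfold Gc; omega

lemma gg_le {k h : ℕ} (hk : 2 ≤ k) (hh : 2 ≤ h) {ℓ i : ℕ} (hℓ : ℓ < k) (hi : i < h) :
    gg k h ℓ i ≤ Gc k h := by
  unfold gg; split
  · omega
  · have : ℓ*h + i < k*h := by
      have : (ℓ+1)*h ≤ k*h := Nat.mul_le_mul_right _ (by omega)
      have e : (ℓ+1)*h = ℓ*h + h := by ring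
      omega
    unfold Gc; omega

lemma gg_lt_kh {k h : ℕ} {ℓ i : ℕ} (hℓ : ℓ < k) (hi : i < h) (hi' : i ≠ h - 1) :
    gg k h ℓ i < k*h := by
  unfold gg; rw [if_neg hi']
  have : (ℓ+1)*h ≤ k*h := Nat.mul_le_mul_right _ (by omega)
  have e : (ℓ+1)*h = ℓ*h + h := by ring
  omega

lemma gg_last_ge {k h : ℕ} (hh : 2 ≤ h) {ℓ : ℕ} (hℓ : ℓ < k) :
    k*h + 1 ≤ gg k h ℓ (h-1) := by
  unfold gg; rw [if_pos rfl]
  have := gg_sub_le (k := k) hh hℓ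
  omega

lemma gg_inj {k h : ℕ} (hk : 2 ≤ k) (hh : 2 ≤ h) {ℓ i ℓ' i' : ℕ}
    (hℓ : ℓ < k) (hi : i < h) (hℓ' : ℓ' < k) (hi' : i' < h)
    (e : gg k h ℓ i = gg k h ℓ' i') : ℓ = ℓ' ∧ i = i' := by
  by_cases c1 : i = h - 1 <;> by_cases c2 : i' = h - 1
  · subst c1; subst c2
    refine ⟨?_, rfl⟩
    have e1 := gg_sub_le (k := k) hh hℓ
    have e2 := gg_sub_le (k := k) hh hℓ'
    unfold gg at e; rw [if_pos rfl, if_pos rfl] at e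
    have : (h-1)*h*ℓ = (h-1)*h*ℓ' := by omega
    have hpos : 0 < (h-1)*h := by
      have : 1*2 ≤ (h-1)*h := Nat.mul_le_mul (by omega) (by omega)
      omega
    exact Nat.eq_of_mul_eq_mul_left hpos this
  · exfalso
    have h1 := gg_last_ge (k := k) hh hℓ
    have h2 := gg_lt_kh hℓ' hi' c2
    rw [← c1] at h1; omega
  · exfalso
    have h1 := gg_last_ge (k := k) hh hℓ'
    have h2 := gg_lt_kh hℓ hi c1
    rw [← c2] at h1; omega
  · unfold gg at e; rw [if_neg c1, if_neg c2] at e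
    constructor
    · by_contra hne
      rcases Nat.lt_or_ge ℓ ℓ' with hlt | hge
      · have : (ℓ+1)*h ≤ ℓ'*h := Nat.mul_le_mul_right _ (by omega)
        have e2 : (ℓ+1)*h = ℓ*h + h := by ring
        omega
      · have hlt : ℓ' < ℓ := by omega
        have : (ℓ'+1)*h ≤ ℓ*h := Nat.mul_le_mul_right _ (by omega)
        have e2 : (ℓ'+1)*h = ℓ'*h + h := by ring
        omega
    · have : ℓ = ℓ' := by
        by_contra hne
        rcases Nat.lt_or_ge ℓ ℓ' with hlt | hge
        · have : (ℓ+1)*h ≤ ℓ'*h := Nat.mul_le_mul_right _ (by omega)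
          have e2 : (ℓ+1)*h = ℓ*h + h := by ring
          omega
        · have hlt : ℓ' < ℓ := by omega
          have : (ℓ'+1)*h ≤ ℓ*h := Nat.mul_le_mul_right _ (by omega)
          have e2 : (ℓ'+1)*h = ℓ'*h + h := by ring
          omega
      subst this; omega

lemma sum_uu {h : ℕ} (hh : 2 ≤ h) (ℓ : ℕ) : ∑ i ∈ range h, uu h ℓ i = 2*(h-1) := by
  obtain ⟨m, rfl⟩ : ∃ m, h = m + 1 := ⟨h-1, by omega⟩
  rw [Finset.sum_range_succ']
  by_cases hℓ : ℓ = 0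
  · subst hℓ
    have e1 : ∀ i ∈ range m, uu (m+1) 0 (i+1) = 2 := by
      intro i hi; unfold uu; rw [if_pos rfl, if_neg (by omega)]
    rw [Finset.sum_congr rfl e1, Finset.sum_const, card_range, smul_eq_mul, uu00]
    omega
  · have e1 : ∀ i ∈ range m, uu (m+1) ℓ (i+1) = 1 := by
      intro i hi; unfold uu; rw [if_neg hℓ, if_neg (by omega)]
    rw [Finset.sum_congr rfl e1, Finset.sum_const, card_range, smul_eq_mul]
    unfold uu; rw [if_neg hℓ, if_pos rfl]
    omega

lemma sum_gg {k h : ℕ} (hk : 2 ≤ k) (hh : 2 ≤ h) {ℓ : ℕ} (hℓ : ℓ < k) :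
    ∑ i ∈ range h, gg k h ℓ i = Gc k h := by
  obtain ⟨m, rfl⟩ : ∃ m, h = m + 1 := ⟨h-1, by omega⟩
  rw [Finset.sum_range_succ]
  have e1 : ∀ i ∈ range m, gg k (m+1) ℓ i = ℓ*(m+1) + i := by
    intro i hi; unfold gg; rw [if_neg (by simp at hi; omega)]
  rw [Finset.sum_congr rfl e1, Finset.sum_add_distrib, Finset.sum_const, card_range, smul_eq_mul]
  have e2 : ∑ i ∈ range m, i = c0 (m+1) := by simp [c0]
  rw [e2]
  unfold gg
  simp only [Nat.add_sub_cancel, if_true]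
  have hle := gg_sub_le (k := k) (h := m+1) hh hℓ
  simp only [Nat.add_sub_cancel] at hle
  have e3 : m * (ℓ*(m+1)) = m*(m+1)*ℓ := by ring
  omega

lemma sum_nat_sub {α : Type*} (s : Finset α) (f : α → ℕ) (m : ℕ) (hf : ∀ a ∈ s, f a ≤ m) :
    (∑ a ∈ s, f a ≤ s.card * m) ∧ (∑ a ∈ s, (m - f a) = s.card * m - ∑ a ∈ s, f a) := by
  classical
  induction s using Finset.induction_on with
  | empty => simp
  | @insert a s' hx ih =>
    have hf' : ∀ b ∈ s', f b ≤ m := fun b hb => hf b (mem_insert_of_mem hb)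
    obtain ⟨ih1, ih2⟩ := ih hf'
    have hfa : f a ≤ m := hf a (mem_insert_self a s')
    have e : (s'.card + 1) * m = s'.card * m + m := by ring
    constructor
    · rw [Finset.sum_insert hx, Finset.card_insert_of_notMem hx]; omega
    · rw [Finset.sum_insert hx, Finset.sum_insert hx, Finset.card_insert_of_notMem hx]; omega


def pm (n k h d : ℕ) (v t : Fin d → ℕ) (s : Fin k × Fin h) : Fin d → ℕ :=
  fun j => if 2 * v j ≤ n then v j + (Dc k h * t j * uu h s.1 s.2 + gg k h s.1 s.2)
    else v j - (Dc k h * t j * uu h s.1 s.2 + gg k h s.1 s.2)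

def slots (k h : ℕ) : Finset (Fin k × Fin h) :=
  Finset.univ.filter fun p : Fin k × Fin h => ¬((p.1 : ℕ) = 0 ∧ (p.2 : ℕ) = 0)

def Phi (n k h d : ℕ) (v t : Fin d → ℕ) : Finset (Fin d → ℕ) :=
  (slots k h).image (fun p : Fin k × Fin h => pm n k h d v t p)

lemma Dc_pos (k h : ℕ) : 0 < Dc k h := by unfold Dc; omega

lemma off_le {k h T tj ℓ i : ℕ} (hk : 2 ≤ k) (hh : 2 ≤ h) (htj : tj < T)
    (hℓ : ℓ < k) (hi : i < h) :
    Dc k h * tj * uu h ℓ i + gg k h ℓ i ≤ Dc k h * T * h + Gc k h := by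
  have h1 : Dc k h * tj * uu h ℓ i ≤ Dc k h * T * h :=
    Nat.mul_le_mul (Nat.mul_le_mul_left _ htj.le) (uu_le hh ℓ i)
  have h2 := gg_le hk hh hℓ hi
  omega

lemma off_eq {k h : ℕ} (hk : 2 ≤ k) (hh : 2 ≤ h) {ℓ i ℓ' i' a b : ℕ}
    (hℓ : ℓ < k) (hi : i < h) (hℓ' : ℓ' < k) (hi' : i' < h)
    (e : Dc k h * a * uu h ℓ i + gg k h ℓ i = Dc k h * b * uu h ℓ' i' + gg k h ℓ' i') :
    ℓ = ℓ' ∧ i = i' ∧ a * uu h ℓ i = b * uu h ℓ i := by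
  have h1 : gg k h ℓ i < Dc k h := by have := gg_le hk hh hℓ hi; unfold Dc; omega
  have h2 : gg k h ℓ' i' < Dc k h := by have := gg_le hk hh hℓ' hi'; unfold Dc; omega
  have e' : gg k h ℓ i + (a * uu h ℓ i) * Dc k h = gg k h ℓ' i' + (b * uu h ℓ' i') * Dc k h := by
    calc gg k h ℓ i + (a * uu h ℓ i) * Dc k h
        = Dc k h * a * uu h ℓ i + gg k h ℓ i := by ring
      _ = Dc k h * b * uu h ℓ' i' + gg k h ℓ' i' := e
      _ = gg k h ℓ' i' + (b * uu h ℓ' i') * Dc k h := by ring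
  have m1 : gg k h ℓ i = gg k h ℓ' i' := by
    have := congrArg (· % Dc k h) e'
    simpa [Nat.add_mul_mod_self_right, Nat.mod_eq_of_lt h1, Nat.mod_eq_of_lt h2] using this
  obtain ⟨eℓ, ei⟩ := gg_inj hk hh hℓ hi hℓ' hi' m1
  subst eℓ; subst ei
  refine ⟨rfl, rfl, ?_⟩
  have : (a * uu h ℓ i) * Dc k h = (b * uu h ℓ i) * Dc k h := by omega
  exact Nat.eq_of_mul_eq_mul_right (Dc_pos k h) this

lemma pm_coord_eq {n k h d T : ℕ} (hk : 2 ≤ k) (hh : 2 ≤ h)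
    {v t t' : Fin d → ℕ}
    (hv : ∀ j, 1 ≤ v j ∧ v j ≤ n)
    (hX : 4 * (Dc k h * T * h) ≤ n) (hG : 8 * Gc k h + 8 ≤ n)
    (ht : ∀ j, t j < T) (ht' : ∀ j, t' j < T)
    {s s' : Fin k × Fin h} (e : pm n k h d v t s = pm n k h d v t' s') (j : Fin d) :
    Dc k h * t j * uu h s.1 s.2 + gg k h s.1 s.2
      = Dc k h * t' j * uu h s'.1 s'.2 + gg k h s'.1 s'.2 := by
  have ej := congrFun e j
  have b1 := off_le (T := T) hk hh (ht j) s.1.isLt s.2.isLt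
  have b2 := off_le (T := T) hk hh (ht' j) s'.1.isLt s'.2.isLt
  have hvj := hv j
  unfold pm at ej
  by_cases hc : 2 * v j ≤ n
  · rw [if_pos hc, if_pos hc] at ej; omega
  · rw [if_neg hc, if_neg hc] at ej; omega

lemma pm_inj {n k h d T : ℕ} (hk : 2 ≤ k) (hh : 2 ≤ h) (hd : 1 ≤ d)
    {v t t' : Fin d → ℕ}
    (hv : ∀ j, 1 ≤ v j ∧ v j ≤ n)
    (hX : 4 * (Dc k h * T * h) ≤ n) (hG : 8 * Gc k h + 8 ≤ n)
    (ht : ∀ j, t j < T) (ht' : ∀ j, t' j < T)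
    {s s' : Fin k × Fin h} (e : pm n k h d v t s = pm n k h d v t' s') :
    s = s' ∧ (¬(((s.1 : ℕ) = 0) ∧ ((s.2 : ℕ) = 0)) → t = t') := by
  have key : ∀ j : Fin d,
      Dc k h * t j * uu h s.1 s.2 + gg k h s.1 s.2
        = Dc k h * t' j * uu h s'.1 s'.2 + gg k h s'.1 s'.2 :=
    pm_coord_eq hk hh hv hX hG ht ht' e
  have j0 : Fin d := ⟨0, hd⟩
  obtain ⟨e1, e2, _⟩ := off_eq hk hh s.1.isLt s.2.isLt s'.1.isLt s'.2.isLt (key j0)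
  have hs : s = s' := by
    apply Prod.ext <;> [exact Fin.ext e1; exact Fin.ext e2]
  refine ⟨hs, fun hne => ?_⟩
  subst hs
  funext j
  obtain ⟨_, _, e3⟩ := off_eq hk hh s.1.isLt s.2.isLt s.1.isLt s.2.isLt (key j)
  have hu : 1 ≤ uu h s.1 s.2 := uu_pos hh hne
  exact Nat.eq_of_mul_eq_mul_right hu e3

lemma pm_mem_grid {n k h d T : ℕ} (hk : 2 ≤ k) (hh : 2 ≤ h)
    {v t : Fin d → ℕ}
    (hv : ∀ j, 1 ≤ v j ∧ v j ≤ n)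
    (hX : 4 * (Dc k h * T * h) ≤ n) (hG : 8 * Gc k h + 8 ≤ n)
    (ht : ∀ j, t j < T) (s : Fin k × Fin h) :
    pm n k h d v t s ∈ grid n d := by
  rw [grid, Fintype.mem_piFinset]
  intro j
  rw [Finset.mem_Icc]
  have b1 := off_le (T := T) hk hh (ht j) s.1.isLt s.2.isLt
  have hvj := hv j
  unfold pm
  by_cases hc : 2 * v j ≤ n
  · rw [if_pos hc]; omega
  · rw [if_neg hc]; omega

lemma sum_off {k h tj : ℕ} (hk : 2 ≤ k) (hh : 2 ≤ h) {ℓ : ℕ} (hℓ : ℓ < k) :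
    ∑ i ∈ range h, (Dc k h * tj * uu h ℓ i + gg k h ℓ i)
      = Dc k h * tj * (2*(h-1)) + Gc k h := by
  rw [Finset.sum_add_distrib, ← Finset.mul_sum, sum_uu hh, sum_gg hk hh hℓ]

lemma sum_pm {n k h d T : ℕ} (hk : 2 ≤ k) (hh : 2 ≤ h)
    {v t : Fin d → ℕ}
    (hv : ∀ j, 1 ≤ v j ∧ v j ≤ n)
    (hX : 4 * (Dc k h * T * h) ≤ n) (hG : 8 * Gc k h + 8 ≤ n)
    (ht : ∀ j, t j < T) (ℓ : Fin k) :
    ∑ i : Fin h, pm n k h d v t (ℓ, i)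
      = fun j => if 2 * v j ≤ n then h * v j + (Dc k h * t j * (2*(h-1)) + Gc k h)
          else h * v j - (Dc k h * t j * (2*(h-1)) + Gc k h) := by
  funext j
  rw [Finset.sum_apply]
  by_cases hc : 2 * v j ≤ n
  · rw [if_pos hc]
    have e1 : ∀ i : Fin h, pm n k h d v t (ℓ, i) j
        = v j + (Dc k h * t j * uu h ℓ i + gg k h ℓ i) := by
      intro i; unfold pm; rw [if_pos hc]
    rw [Finset.sum_congr rfl (fun i _ => e1 i), Finset.sum_add_distrib,
      Finset.sum_const, card_univ, Fintype.card_fin, smul_eq_mul]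
    rw [Fin.sum_univ_eq_sum_range (fun m => Dc k h * t j * uu h ℓ m + gg k h ℓ m) h]
    rw [sum_off hk hh ℓ.isLt]
  · rw [if_neg hc]
    have hb : ∀ i : Fin h, Dc k h * t j * uu h ℓ i + gg k h ℓ i ≤ v j := by
      intro i
      have b1 := off_le (T := T) hk hh (ht j) ℓ.isLt i.isLt
      have := hv j
      omega
    have e1 : ∀ i : Fin h, pm n k h d v t (ℓ, i) j
        = v j - (Dc k h * t j * uu h ℓ i + gg k h ℓ i) := by
      intro i; unfold pm; rw [if_neg hc]
    rw [Finset.sum_congr rfl (fun i _ => e1 i)]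
    obtain ⟨_, e2⟩ := sum_nat_sub Finset.univ
      (fun i : Fin h => Dc k h * t j * uu h ℓ i + gg k h ℓ i) (v j) (fun i _ => hb i)
    rw [e2, card_univ, Fintype.card_fin]
    rw [Fin.sum_univ_eq_sum_range (fun m => Dc k h * t j * uu h ℓ m + gg k h ℓ m) h]
    rw [sum_off hk hh ℓ.isLt]


lemma slots_card {k h : ℕ} (hk : 2 ≤ k) (hh : 2 ≤ h) : (slots k h).card = k*h - 1 := by
  classical
  have key := Finset.card_filter_add_card_filter_not
    (s := (Finset.univ : Finset (Fin k × Fin h)))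
    (p := fun p : Fin k × Fin h => ((p.1 : ℕ) = 0 ∧ (p.2 : ℕ) = 0))
  have h1 : (Finset.univ.filter fun p : Fin k × Fin h => ((p.1 : ℕ) = 0 ∧ (p.2 : ℕ) = 0))
      = {((⟨0, by omega⟩ : Fin k), (⟨0, by omega⟩ : Fin h))} := by
    ext p
    simp [Prod.ext_iff, Fin.ext_iff]
  have h2 : (Finset.univ : Finset (Fin k × Fin h)).card = k * h := by
    simp [Finset.card_univ]
  rw [h1] at key
  simp only [Finset.card_singleton] at key
  have : (slots k h).card = (Finset.univ.filter
      fun p : Fin k × Fin h => ¬((p.1 : ℕ) = 0 ∧ (p.2 : ℕ) = 0)).card := rfl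
  omega

lemma mem_slots {k h : ℕ} {p : Fin k × Fin h} :
    p ∈ slots k h ↔ ¬((p.1 : ℕ) = 0 ∧ (p.2 : ℕ) = 0) := by
  simp [slots]

lemma Phi_card {n k h d T : ℕ} (hk : 2 ≤ k) (hh : 2 ≤ h) (hd : 1 ≤ d)
    {v t : Fin d → ℕ}
    (hv : ∀ j, 1 ≤ v j ∧ v j ≤ n)
    (hX : 4 * (Dc k h * T * h) ≤ n) (hG : 8 * Gc k h + 8 ≤ n)
    (ht : ∀ j, t j < T) :
    (Phi n k h d v t).card = k*h - 1 := by
  rw [Phi, Finset.card_image_of_injOn, slots_card hk hh]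
  intro s _ s' _ e
  exact (pm_inj hk hh hd hv hX hG ht ht e).1

lemma Phi_subset_grid {n k h d T : ℕ} (hk : 2 ≤ k) (hh : 2 ≤ h)
    {v t : Fin d → ℕ}
    (hv : ∀ j, 1 ≤ v j ∧ v j ≤ n)
    (hX : 4 * (Dc k h * T * h) ≤ n) (hG : 8 * Gc k h + 8 ≤ n)
    (ht : ∀ j, t j < T) :
    Phi n k h d v t ⊆ grid n d := by
  intro p hp
  obtain ⟨s, _, rfl⟩ := Finset.mem_image.mp hp
  exact pm_mem_grid hk hh hv hX hG ht s

lemma Phi_vconfig {n k h d T : ℕ} (hk : 2 ≤ k) (hh : 2 ≤ h)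
    {v t : Fin d → ℕ}
    (hv : ∀ j, 1 ≤ v j ∧ v j ≤ n)
    (hX : 4 * (Dc k h * T * h) ≤ n) (hG : 8 * Gc k h + 8 ≤ n)
    (ht : ∀ j, t j < T) :
    IsVConfig d k h v (Phi n k h d v t) := by
  refine ⟨fun ℓ i => pm n k h d v t (ℓ, i), ?_, ?_, ?_⟩
  · rintro ℓ i ⟨hℓ, hi⟩
    funext j
    show (if 2 * v j ≤ n then v j + (Dc k h * t j * uu h (ℓ : ℕ) (i : ℕ) + gg k h ℓ i)
      else v j - (Dc k h * t j * uu h ℓ i + gg k h ℓ i)) = v j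
    rw [hℓ, hi, uu00, gg00 hh]
    split <;> simp
  · intro ℓ₁ ℓ₂
    rw [sum_pm hk hh hv hX hG ht ℓ₁, sum_pm hk hh hv hX hG ht ℓ₂]
  · rfl

lemma Phi_disjoint {n k h d T : ℕ} (hk : 2 ≤ k) (hh : 2 ≤ h) (hd : 1 ≤ d)
    {v t t' : Fin d → ℕ}
    (hv : ∀ j, 1 ≤ v j ∧ v j ≤ n)
    (hX : 4 * (Dc k h * T * h) ≤ n) (hG : 8 * Gc k h + 8 ≤ n)
    (ht : ∀ j, t j < T) (ht' : ∀ j, t' j < T) (hne : t ≠ t') :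
    Disjoint (Phi n k h d v t) (Phi n k h d v t') := by
  rw [Finset.disjoint_left]
  intro p hp hp'
  obtain ⟨s, hs, rfl⟩ := Finset.mem_image.mp hp
  obtain ⟨s', hs', e⟩ := Finset.mem_image.mp hp'
  obtain ⟨rfl, h2⟩ := pm_inj hk hh hd hv hX hG ht' ht e
  exact hne (h2 (mem_slots.mp hs')).symm

lemma Phi_nonempty {n k h d : ℕ} (hk : 2 ≤ k) (hh : 2 ≤ h)
    (v t : Fin d → ℕ) : (Phi n k h d v t).Nonempty := by
  refine ⟨pm n k h d v t ((⟨0, by omega⟩ : Fin k), (⟨1, by omega⟩ : Fin h)), ?_⟩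
  apply Finset.mem_image_of_mem
  rw [mem_slots]
  simp

lemma grid_card (n d : ℕ) : (grid n d).card = n^d := by
  rw [grid, Fintype.card_piFinset]
  simp [Nat.card_Icc]

end S17

/-- many pairwise disjoint (kh-1)-element configurations through a point `v`
avoiding a small deviation set `M`. -/
theorem stmt17 (d k h : ℕ) (hd : 1 ≤ d) (hk : 2 ≤ k) (hh : 2 ≤ h) :
    ∃ c : ℝ, 0 < c ∧ ∃ N : ℕ, ∀ n : ℕ, N ≤ n →
      ∀ A : Finset (Fin d → ℕ), A ⊆ grid n d →
      (n : ℝ) ^ d - (n : ℝ) ^ d / Real.logb 2 n ≤ (A.card : ℝ) →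
      ∀ M : Finset (Fin d → ℕ), M ⊆ A →
      (M.card : ℝ) ≤ (A.card : ℝ) / (Real.logb 2 n) ^ 2 →
      ∀ v ∈ A,
      ∃ ℱ : Finset (Finset (Fin d → ℕ)),
        c * (n : ℝ) ^ d ≤ (ℱ.card : ℝ) ∧
        (∀ F ∈ ℱ, F ⊆ A \ M ∧ F.card = k * h - 1 ∧ IsVConfig d k h v F) ∧
        (∀ F₁ ∈ ℱ, ∀ F₂ ∈ ℱ, F₁ ≠ F₂ → Disjoint F₁ F₂) := by
  classical
  have hDpos : 0 < S17.Dc k h := S17.Dc_pos k h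
  have hEpos : 0 < S17.Ec k h := by
    have : 0 < 4 * S17.Dc k h := by omega
    exact Nat.mul_pos this (by omega)
  have hcpos : (0:ℝ) < 1 / (2 * (2*(S17.Ec k h : ℝ))^d) := by
    apply div_pos one_pos
    apply mul_pos two_pos
    apply pow_pos
    have : (0:ℝ) < (S17.Ec k h : ℝ) := by exact_mod_cast hEpos
    linarith
  refine ⟨1 / (2 * (2*(S17.Ec k h : ℝ))^d), hcpos, ?_⟩
  refine ⟨max (max (2 * S17.Ec k h) (8 * S17.Gc k h + 8)) (2^(4*(2*S17.Ec k h)^d)), ?_⟩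
  intro n hn A hA hAcard M hM hMcard v hvA
  have hn1 : 2 * S17.Ec k h ≤ n :=
    le_trans (le_trans (le_max_left _ _) (le_max_left _ _)) hn
  have hn2G : 8 * S17.Gc k h + 8 ≤ n :=
    le_trans (le_trans (le_max_right _ _) (le_max_left _ _)) hn
  have hn3 : 2^(4*(2*S17.Ec k h)^d) ≤ n := le_trans (le_max_right _ _) hn
  have hn2 : 2 ≤ n := by omega
  set T := n / S17.Ec k h with hTdef
  have hdm : S17.Ec k h * T + n % S17.Ec k h = n := by
    rw [hTdef]; exact Nat.div_add_mod n _
  have hmod : n % S17.Ec k h < S17.Ec k h := Nat.mod_lt _ hEpos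
  have hXn : 4 * (S17.Dc k h * T * h) ≤ n := by
    have e : 4 * (S17.Dc k h * T * h) = S17.Ec k h * T := by unfold S17.Ec; ring
    omega
  have hn2ET : n ≤ 2 * (S17.Ec k h * T) := by omega
  have hvg : ∀ j, 1 ≤ v j ∧ v j ≤ n := by
    have hmem := hA hvA
    rw [grid, Fintype.mem_piFinset] at hmem
    intro j
    have := hmem j
    rwa [Finset.mem_Icc] at this
  set P : Finset (Fin d → ℕ) := Fintype.piFinset (fun _ : Fin d => Finset.range T) with hPdef
  have hmemP : ∀ t ∈ P, ∀ j, t j < T := by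
    intro t ht j
    rw [hPdef, Fintype.mem_piFinset] at ht
    have := ht j
    rwa [Finset.mem_range] at this
  have hdisj : ∀ t ∈ P, ∀ t' ∈ P, t ≠ t' → Disjoint (S17.Phi n k h d v t) (S17.Phi n k h d v t') :=
    fun t ht t' ht' hne =>
      S17.Phi_disjoint hk hh hd hvg hXn hn2G (hmemP t ht) (hmemP t' ht') hne
  set Pg := P.filter (fun t => S17.Phi n k h d v t ⊆ A \ M) with hPgdef
  set Pb := P.filter (fun t => ¬ S17.Phi n k h d v t ⊆ A \ M) with hPbdef
  set Bad := grid n d \ (A \ M) with hBaddef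
  refine ⟨Pg.image (fun t => S17.Phi n k h d v t), ?_, ?_, ?_⟩
  · -- cardinality bound
    have hcardim : (Pg.image (fun t => S17.Phi n k h d v t)).card = Pg.card := by
      apply Finset.card_image_of_injOn
      intro t ht t' ht' e
      by_contra hne
      have hd2 := hdisj t (Finset.filter_subset _ _ ht) t' (Finset.filter_subset _ _ ht') hne
      have e' : S17.Phi n k h d v t = S17.Phi n k h d v t' := e
      rw [e', disjoint_self] at hd2
      exact (S17.Phi_nonempty (n := n) (d := d) hk hh v t').ne_empty
        (by rw [← Finset.bot_eq_empty]; exact hd2)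
    have hPcard : P.card = T^d := by
      rw [hPdef, Fintype.card_piFinset]
      simp
    have hsplit : Pg.card + Pb.card = P.card :=
      Finset.card_filter_add_card_filter_not (p := fun t => S17.Phi n k h d v t ⊆ A \ M)
    have hPbBad : Pb.card ≤ Bad.card := by
      apply Finset.card_le_card_of_injOn
        (fun t => if hne : ((S17.Phi n k h d v t) \ (A \ M)).Nonempty then hne.choose else v)
      · intro t ht
        simp only [hPbdef, Finset.mem_coe, Finset.mem_filter] at ht
        have hne : ((S17.Phi n k h d v t) \ (A \ M)).Nonempty := Finset.sdiff_nonempty.mpr ht.2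
        beta_reduce
        rw [dif_pos hne]
        have hs := hne.choose_spec
        rw [Finset.mem_sdiff] at hs
        rw [hBaddef, Finset.mem_coe, Finset.mem_sdiff]
        exact ⟨S17.Phi_subset_grid hk hh hvg hXn hn2G (hmemP t ht.1) hs.1, hs.2⟩
      · intro t ht t' ht' e
        have ht2 : t ∈ Pb := Finset.mem_coe.mp ht
        have ht2' : t' ∈ Pb := Finset.mem_coe.mp ht'
        rw [hPbdef, Finset.mem_filter] at ht2 ht2'
        clear ht ht'
        have ht := ht2; have ht' := ht2'
        have hne1 : ((S17.Phi n k h d v t) \ (A \ M)).Nonempty := Finset.sdiff_nonempty.mpr ht.2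
        have hne2 : ((S17.Phi n k h d v t') \ (A \ M)).Nonempty := Finset.sdiff_nonempty.mpr ht'.2
        have e2 : (if hp : (S17.Phi n k h d v t \ (A \ M)).Nonempty then hp.choose else v)
            = (if hp : (S17.Phi n k h d v t' \ (A \ M)).Nonempty then hp.choose else v) := e
        rw [dif_pos hne1, dif_pos hne2] at e2
        by_contra hnet
        have hdisj2 := hdisj t ht.1 t' ht'.1 hnet
        have m1 := hne1.choose_spec
        rw [Finset.mem_sdiff] at m1
        have m2 := hne2.choose_spec
        rw [Finset.mem_sdiff] at m2
        rw [Finset.disjoint_left] at hdisj2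
        exact hdisj2 m1.1 (e2 ▸ m2.1)
    have hBadcard : Bad.card ≤ (n^d - A.card) + M.card := by
      have hsub : Bad ⊆ (grid n d \ A) ∪ M := by
        intro p hp
        rw [hBaddef, Finset.mem_sdiff] at hp
        rw [Finset.mem_union, Finset.mem_sdiff]
        by_cases hpA : p ∈ A
        · right
          by_contra hpM
          exact hp.2 (Finset.mem_sdiff.mpr ⟨hpA, hpM⟩)
        · left; exact ⟨hp.1, hpA⟩
      calc Bad.card ≤ ((grid n d \ A) ∪ M).card := Finset.card_le_card hsub
        _ ≤ (grid n d \ A).card + M.card := Finset.card_union_le _ _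
        _ = (n^d - A.card) + M.card := by rw [Finset.card_sdiff_of_subset hA, S17.grid_card]
    have hAn : A.card ≤ n^d := by
      rw [← S17.grid_card n d]
      exact Finset.card_le_card hA
    -- real arithmetic
    have hlogpow : ∀ m : ℕ, (2:ℕ)^m ≤ n → (m:ℝ) ≤ Real.logb 2 n := by
      intro m hm
      have h1 : Real.logb 2 ((2:ℝ)^m) = m := by
        rw [Real.logb_pow, Real.logb_self_eq_one (by norm_num), mul_one]
      calc (m:ℝ) = Real.logb 2 ((2:ℝ)^m) := h1.symm
        _ ≤ Real.logb 2 n := by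
            apply Real.logb_le_logb_of_le (by norm_num) (by positivity)
            exact_mod_cast hm
    have hL1 : 1 ≤ Real.logb 2 n := by
      have := hlogpow 1 (by omega)
      simpa using this
    have hLpos : 0 < Real.logb 2 n := by linarith
    have hLbig : 4*(2*(S17.Ec k h : ℝ))^d ≤ Real.logb 2 n := by
      have := hlogpow (4*(2*S17.Ec k h)^d) hn3
      calc 4*(2*(S17.Ec k h : ℝ))^d = ((4*(2*S17.Ec k h)^d : ℕ) : ℝ) := by push_cast; ring
        _ ≤ Real.logb 2 n := this
    have hnR : (0:ℝ) ≤ (n:ℝ)^d := by positivity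
    have hERpos : (0:ℝ) < (S17.Ec k h : ℝ) := by exact_mod_cast hEpos
    have hpow1 : (0:ℝ) < (2*(S17.Ec k h : ℝ))^d := by
      have h2e : (0:ℝ) < 2*(S17.Ec k h : ℝ) := by linarith
      exact pow_pos h2e d
    have hpow4 : (0:ℝ) < 4*(2*(S17.Ec k h : ℝ))^d := by linarith
    have hMr : (M.card:ℝ) ≤ (n:ℝ)^d / (Real.logb 2 n)^2 := by
      apply le_trans hMcard
      have hcast : (A.card:ℝ) ≤ (n:ℝ)^d := by exact_mod_cast hAn
      gcongr
    have hgA : ((n^d - A.card : ℕ):ℝ) ≤ (n:ℝ)^d / Real.logb 2 n := by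
      have hcast : ((n^d - A.card : ℕ):ℝ) = (n:ℝ)^d - (A.card:ℝ) := by
        rw [Nat.cast_sub hAn]
        push_cast
        ring
      rw [hcast]
      linarith [hAcard]
    have hBadR : (Bad.card:ℝ) ≤ (n:ℝ)^d / Real.logb 2 n + (n:ℝ)^d / (Real.logb 2 n)^2 := by
      calc (Bad.card:ℝ) ≤ (((n^d - A.card) + M.card : ℕ) : ℝ) := by exact_mod_cast hBadcard
        _ = ((n^d - A.card : ℕ):ℝ) + (M.card:ℝ) := by push_cast; ring
        _ ≤ _ := by linarith
    have hL2 : (n:ℝ)^d / (Real.logb 2 n)^2 ≤ (n:ℝ)^d / Real.logb 2 n :=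
      div_le_div_of_nonneg_left hnR hLpos (by nlinarith)
    have hBadR2 : (Bad.card:ℝ) ≤ (n:ℝ)^d / (2*(2*(S17.Ec k h : ℝ))^d) := by
      have hq : (n:ℝ)^d / Real.logb 2 n ≤ (n:ℝ)^d / (4*(2*(S17.Ec k h : ℝ))^d) :=
        div_le_div_of_nonneg_left hnR hpow4 hLbig
      have e : (n:ℝ)^d / (4*(2*(S17.Ec k h : ℝ))^d) * 2 = (n:ℝ)^d / (2*(2*(S17.Ec k h : ℝ))^d) := by
        field_simp
        ring
      linarith
    have hTrealR : (n:ℝ) ≤ 2*(S17.Ec k h : ℝ)*(T:ℝ) := by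
      have h2 : (n:ℝ) ≤ 2*((S17.Ec k h : ℝ)*(T:ℝ)) := by exact_mod_cast hn2ET
      linarith
    have hTd : (n:ℝ)^d / (2*(S17.Ec k h : ℝ))^d ≤ (T:ℝ)^d := by
      have h1 : (n:ℝ)/(2*(S17.Ec k h : ℝ)) ≤ (T:ℝ) := by
        rw [div_le_iff₀ (by positivity)]
        linarith
      calc (n:ℝ)^d/(2*(S17.Ec k h : ℝ))^d = ((n:ℝ)/(2*(S17.Ec k h : ℝ)))^d := by rw [div_pow]
        _ ≤ (T:ℝ)^d := pow_le_pow_left₀ (by positivity) h1 d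
    have hPgR : ((T:ℝ))^d ≤ (Pg.card:ℝ) + (Bad.card:ℝ) := by
      have hnat : T^d ≤ Pg.card + Bad.card := by omega
      exact_mod_cast hnat
    rw [hcardim]
    have key : (n:ℝ)^d / (2*(2*(S17.Ec k h : ℝ))^d) * 2 = (n:ℝ)^d / (2*(S17.Ec k h : ℝ))^d := by
      field_simp
    have e2 : 1 / (2 * (2*(S17.Ec k h : ℝ))^d) * (n:ℝ)^d = (n:ℝ)^d / (2*(2*(S17.Ec k h : ℝ))^d) := by
      ring
    rw [e2]
    linarith
  · -- properties of each F
    intro F hF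
    obtain ⟨t, htg, rfl⟩ := Finset.mem_image.mp hF
    rw [hPgdef, Finset.mem_filter] at htg
    exact ⟨htg.2, S17.Phi_card hk hh hd hvg hXn hn2G (hmemP t htg.1),
      S17.Phi_vconfig hk hh hvg hXn hn2G (hmemP t htg.1)⟩
  · -- pairwise disjoint
    intro F1 h1 F2 h2 hne
    obtain ⟨t1, ht1, rfl⟩ := Finset.mem_image.mp h1
    obtain ⟨t2, ht2, rfl⟩ := Finset.mem_image.mp h2
    rw [hPgdef, Finset.mem_filter] at ht1 ht2
    exact hdisj t1 ht1.1 t2 ht2.1 (fun e => hne (by rw [e]))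
end
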